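/- arXiv:2504.18060 — 4 statements merged into one kernel-verified Lean document; each statement's English description precedes it below -/
import Mathlib

section
/- Let b ≥ 2 be an even integer and fix θ ∈ (−π/2, π/2). Then, as t → 0⁺ and with h = t·e^{iθ}, one has h_b(e^{−h}) → 2/b; that is, the false theta function h_b has the limiting value 2/b at q = 1 radially along any ray in the right half h-plane. -/
open Complex

/-- `ε_b(n)`: `(−1)^n` if `b` is odd; if `b` is even, `1` for `n ≥ 0` and `−1` for `n < 0`. -/
def eps (b : ℕ) (n : ℤ) : ℤ :=
  if Odd b then (if Even n then 1 else -1)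
  else (if 0 ≤ n then 1 else -1)

/-- The exponent `b·n(n+1)/2 − n` (an integer, nonnegative for `b ≥ 1`). -/
def hExp (b : ℕ) (n : ℤ) : ℤ := (b : ℤ) * (n * (n + 1)) / 2 - n

/-- `h_b(q) = Σ_{n∈ℤ} ε_b(n) q^{b n(n+1)/2 − n}` for complex `q` (absolutely convergent
for `|q| < 1`; the exponents are nonnegative integers). -/
noncomputable def hC (b : ℕ) (q : ℂ) : ℂ :=
  ∑' n : ℤ, (eps b n : ℂ) * q ^ (hExp b n).toNat

namespace HbAux

/-! ### Block structure: for `b = 2(d+1)`, the series `h_b(q)` is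
`Σ_m (q^{A_m} − q^{B_m})` with `A_m = (d+1)m² + dm`, `B_m = A_m + 2m+1`. -/

/-- start of block `m` -/
def A (d m : ℕ) : ℕ := (d+1)*m^2 + d*m

/-- end of block `m` -/
def B (d m : ℕ) : ℕ := A d m + (2*m+1)

lemma A_zero (d : ℕ) : A d 0 = 0 := by simp [A]

lemma sq_le_A (d m : ℕ) : m^2 ≤ A d m := by unfold A; nlinarith

lemma B_le_A_succ (d m : ℕ) : B d m ≤ A d (m+1) := by unfold B A; nlinarith

lemma A_mono (d : ℕ) : StrictMono (A d) := by
  have h : ∀ m, A d m < A d (m+1) := by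
    intro m
    have := B_le_A_succ d m
    unfold B at this; omega
  exact strictMono_nat_of_lt_succ h

lemma B_mono (d : ℕ) : StrictMono (B d) := by
  intro a b hab
  unfold B
  have := A_mono d hab
  omega

lemma hExp_nat (d : ℕ) (m : ℕ) : hExp (2*(d+1)) (m : ℤ) = (A d m : ℤ) := by
  unfold hExp A
  have h2 : ((2*(d+1) : ℕ) : ℤ) * ((m:ℤ) * ((m:ℤ) + 1)) = 2 * (((d:ℤ)+1) * (m * (m+1))) := by
    push_cast; ring
  rw [h2, Int.mul_ediv_cancel_left _ two_ne_zero]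
  push_cast; ring

lemma hExp_neg (d : ℕ) (m : ℕ) : hExp (2*(d+1)) (-((m : ℤ)+1)) = (B d m : ℤ) := by
  unfold hExp B A
  have h2 : ((2*(d+1) : ℕ) : ℤ) * ((-((m:ℤ)+1)) * ((-((m:ℤ)+1)) + 1)) =
      2 * (((d:ℤ)+1) * ((m:ℤ) * ((m:ℤ)+1))) := by
    push_cast; ring
  rw [h2, Int.mul_ediv_cancel_left _ two_ne_zero]
  push_cast; ring

/-- index set of occupied positions -/
abbrev P : Type := Σ m : ℕ, Fin (2*m+1)

def phi (d : ℕ) (p : P) : ℕ := A d p.1 + p.2.1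

lemma phi_def (d : ℕ) (p : P) : phi d p = A d p.1 + p.2.1 := rfl

lemma phi_mem (d : ℕ) (p : P) : A d p.1 ≤ phi d p ∧ phi d p < B d p.1 := by
  obtain ⟨m, i⟩ := p
  have := i.2
  unfold phi B
  exact ⟨Nat.le_add_right _ _, by omega⟩

lemma phi_inj (d : ℕ) : Function.Injective (phi d) := by
  rintro ⟨m, i⟩ ⟨m', i'⟩ h
  have hm : m = m' := by
    by_contra hne
    rcases Nat.lt_or_ge m m' with hlt | hge
    · have h1 : phi d ⟨m, i⟩ < B d m := (phi_mem d ⟨m, i⟩).2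
      have h2 : B d m ≤ A d m' := le_trans (B_le_A_succ d m) (A_mono d |>.monotone hlt)
      have h3 : A d m' ≤ phi d ⟨m', i'⟩ := (phi_mem d ⟨m', i'⟩).1
      omega
    · have hlt : m' < m := lt_of_le_of_ne hge (fun h => hne h.symm)
      have h1 : phi d ⟨m', i'⟩ < B d m' := (phi_mem d ⟨m', i'⟩).2
      have h2 : B d m' ≤ A d m := le_trans (B_le_A_succ d m') (A_mono d |>.monotone hlt)
      have h3 : A d m ≤ phi d ⟨m, i⟩ := (phi_mem d ⟨m, i⟩).1
      omega
  subst hm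
  simp only [phi] at h
  have : i = i' := Fin.ext (by omega)
  rw [this]

open Classical in
/-- indicator of occupied positions -/
noncomputable def eHat (d k : ℕ) : ℕ := if ∃ p : P, phi d p = k then 1 else 0

lemma eHat_le_one (d k : ℕ) : eHat d k ≤ 1 := by unfold eHat; split <;> omega

lemma eHat_phi (d : ℕ) (p : P) : eHat d (phi d p) = 1 := by
  unfold eHat; rw [if_pos ⟨p, rfl⟩]

lemma eHat_eq_zero (d k : ℕ) (h : ¬ ∃ p : P, phi d p = k) : eHat d k = 0 := by
  unfold eHat; rw [if_neg h]

lemma eHat_of_mem (d m k : ℕ) (h1 : A d m ≤ k) (h2 : k < B d m) : eHat d k = 1 := by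
  have : phi d ⟨m, ⟨k - A d m, by unfold B at h2; omega⟩⟩ = k := by unfold phi; simp; omega
  unfold eHat; rw [if_pos ⟨_, this⟩]

lemma eHat_of_gap (d m k : ℕ) (h1 : B d m ≤ k) (h2 : k < A d (m+1)) : eHat d k = 0 := by
  unfold eHat
  rw [if_neg]
  rintro ⟨⟨j, i⟩, rfl⟩
  have hmem : A d j ≤ phi d ⟨j, i⟩ ∧ phi d ⟨j, i⟩ < B d j := phi_mem d ⟨j, i⟩
  rcases Nat.lt_or_ge j (m+1) with hj | hj
  · have : B d j ≤ B d m := (B_mono d).monotone (by omega)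
    omega
  · have : A d (m+1) ≤ A d j := (A_mono d).monotone hj
    omega

/-- counting function: number of occupied positions `< n` -/
noncomputable def E (d n : ℕ) : ℕ := ∑ k ∈ Finset.range n, eHat d k

lemma E_zero (d : ℕ) : E d 0 = 0 := by simp [E]

lemma E_succ (d n : ℕ) : E d (n+1) = E d n + eHat d n := Finset.sum_range_succ _ n

lemma E_mono (d : ℕ) : Monotone (E d) := by
  intro a b hab
  exact Finset.sum_le_sum_of_subset (Finset.range_subset_range.2 hab)

lemma E_le (d n : ℕ) : E d n ≤ n := by
  calc E d n ≤ ∑ _k ∈ Finset.range n, 1 := Finset.sum_le_sum (fun k _ => eHat_le_one d k)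
  _ = n := by simp

lemma E_A (d m : ℕ) : E d (A d m) = m^2 := by
  induction m with
  | zero => simp [A_zero, E]
  | succ m ih =>
    have h1 : A d m ≤ B d m := by unfold B; omega
    have h2 : B d m ≤ A d (m+1) := B_le_A_succ d m
    have hblock : ∑ k ∈ Finset.Ico (A d m) (B d m), eHat d k = 2*m+1 := by
      have hone : ∀ k ∈ Finset.Ico (A d m) (B d m), eHat d k = 1 := by
        intro k hk
        rw [Finset.mem_Ico] at hk
        exact eHat_of_mem d m k hk.1 hk.2
      rw [Finset.sum_congr rfl hone]
      simp [B, Nat.card_Ico]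
    have hgap : ∑ k ∈ Finset.Ico (B d m) (A d (m+1)), eHat d k = 0 := by
      apply Finset.sum_eq_zero
      intro k hk
      rw [Finset.mem_Ico] at hk
      exact eHat_of_gap d m k hk.1 hk.2
    have key : E d (A d (m+1)) = E d (A d m) + (2*m+1) := by
      unfold E
      rw [← Finset.sum_range_add_sum_Ico _ (le_trans h1 h2),
        ← Finset.sum_Ico_consecutive _ h1 h2, hblock, hgap]
    rw [key, ih]; ring

lemma exists_block (d n : ℕ) : ∃ m, A d m ≤ n ∧ n < A d (m+1) := by
  have hA0 : A d 0 ≤ n := by rw [A_zero]; exact Nat.zero_le n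
  have hbound : ∀ m, A d m ≤ n → m ≤ n := by
    intro m hm
    have h1 : m^2 ≤ n := le_trans (sq_le_A d m) hm
    nlinarith
  classical
  let m := Nat.findGreatest (fun m => A d m ≤ n) (n+1)
  have hm : A d m ≤ n := by
    have := Nat.findGreatest_spec (P := fun m => A d m ≤ n) (Nat.zero_le (n+1)) hA0
    exact this
  refine ⟨m, hm, ?_⟩
  by_contra hcon
  push_neg at hcon
  have hle : m + 1 ≤ n + 1 := by have := hbound m hm; omega
  have h2 : m + 1 ≤ m := Nat.le_findGreatest (P := fun j => A d j ≤ n) hle hcon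
  omega

/-- The central combinatorial estimate: `|E n − n/(d+1)| ≤ 3 m + 2` on block `m`. -/
lemma E_est (d n m : ℕ) (h1 : A d m ≤ n) (h2 : n < A d (m+1)) :
    |(E d n : ℝ) - n / (d+1)| ≤ 3*m + 2 := by
  have hd : (0:ℝ) < (d:ℝ) + 1 := by positivity
  have hE1 : (m^2 : ℕ) ≤ E d n := by rw [← E_A d m]; exact E_mono d h1
  have hE2 : E d n ≤ ((m+1)^2 : ℕ) := by
    rw [← E_A d (m+1)]; exact E_mono d (le_of_lt h2)
  have hn1 : (m:ℝ)^2 ≤ (n:ℝ) / (d+1) := by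
    rw [le_div_iff₀ hd]
    have : ((A d m : ℕ) : ℝ) ≤ (n:ℝ) := by exact_mod_cast h1
    have hAm : ((A d m : ℕ) : ℝ) = ((d:ℝ)+1)*(m:ℝ)^2 + (d:ℝ)*(m:ℝ) := by
      unfold A; push_cast; ring
    nlinarith [Nat.cast_nonneg (α := ℝ) d, Nat.cast_nonneg (α := ℝ) m]
  have hn2 : (n:ℝ) / (d+1) ≤ ((m:ℝ)+1)^2 + ((m:ℝ)+1) := by
    rw [div_le_iff₀ hd]
    have hlt : (n:ℝ) ≤ ((A d (m+1) : ℕ) : ℝ) := by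
      have := le_of_lt h2; exact_mod_cast this
    have hAm : ((A d (m+1) : ℕ) : ℝ) = ((d:ℝ)+1)*((m:ℝ)+1)^2 + (d:ℝ)*((m:ℝ)+1) := by
      unfold A; push_cast; ring
    nlinarith [Nat.cast_nonneg (α := ℝ) d, Nat.cast_nonneg (α := ℝ) m]
  have hE1' : (m:ℝ)^2 ≤ (E d n : ℝ) := by exact_mod_cast hE1
  have hE2' : (E d n : ℝ) ≤ ((m:ℝ)+1)^2 := by exact_mod_cast hE2
  rw [abs_le]
  constructor <;> nlinarith

lemma E_asymp (d : ℕ) {ε : ℝ} (hε : 0 < ε) :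
    ∃ M : ℕ, ∀ n ≥ M, |(E d (n+1) : ℝ) - ((n:ℝ)+1) / (d+1)| ≤ ε * ((n:ℝ)+1) := by
  obtain ⟨m₀', hm₀'⟩ := exists_nat_ge (5 / ε)
  set m₀ := m₀' + 1 with hm₀def
  have hm₀ : 5 ≤ ε * m₀ := by
    have h5 : 5 / ε ≤ (m₀ : ℝ) := by
      rw [hm₀def]; push_cast; linarith [hm₀']
    calc (5:ℝ) = (5/ε) * ε := by field_simp
    _ ≤ (m₀:ℝ) * ε := by apply mul_le_mul_of_nonneg_right h5 (le_of_lt hε)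
    _ = ε * m₀ := by ring
  obtain ⟨M', hM'⟩ := exists_nat_ge ((3*(m₀:ℝ) + 2) / ε)
  refine ⟨M' + 1, fun n hn => ?_⟩
  obtain ⟨m, hm1, hm2⟩ := exists_block d (n+1)
  have hest := E_est d (n+1) m hm1 hm2
  push_cast at hest
  have hmsq : (m:ℝ)^2 ≤ (n:ℝ)+1 := by
    have : m^2 ≤ n+1 := le_trans (sq_le_A d m) hm1
    exact_mod_cast this
  have hN : ((3*(m₀:ℝ)) + 2) ≤ ε * ((n:ℝ)+1) := by
    have h1 : ((3*(m₀:ℝ)) + 2) ≤ ε * M' := by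
      calc (3*(m₀:ℝ) + 2) = ((3*(m₀:ℝ)+2)/ε) * ε := by field_simp
      _ ≤ (M':ℝ) * ε := mul_le_mul_of_nonneg_right hM' (le_of_lt hε)
      _ = ε * M' := by ring
    have h2 : (M':ℝ) ≤ (n:ℝ) + 1 := by
      have : M' ≤ n + 1 := by omega
      exact_mod_cast this
    nlinarith
  rcases le_or_gt m₀ m with hcase | hcase
  · have hm1' : 1 ≤ m := le_trans (by omega) hcase
    have h5m : 3*(m:ℝ) + 2 ≤ 5*m := by
      have : (1:ℝ) ≤ m := by exact_mod_cast hm1'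
      nlinarith
    have hem : 5 ≤ ε * m := by
      have : (m₀:ℝ) ≤ m := by exact_mod_cast hcase
      nlinarith
    have : 5*(m:ℝ) ≤ ε * (m:ℝ)^2 := by nlinarith [Nat.cast_nonneg (α := ℝ) m]
    have : 3*(m:ℝ) + 2 ≤ ε * ((n:ℝ)+1) := by nlinarith
    calc |(E d (n+1) : ℝ) - ((n:ℝ)+1) / (d+1)| ≤ 3*m + 2 := hest
    _ ≤ ε * ((n:ℝ)+1) := this
  · have : (m:ℝ) ≤ m₀ := by exact_mod_cast le_of_lt hcase
    calc |(E d (n+1) : ℝ) - ((n:ℝ)+1) / (d+1)| ≤ 3*m + 2 := hest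
    _ ≤ 3*(m₀:ℝ) + 2 := by linarith
    _ ≤ ε * ((n:ℝ)+1) := hN

/-! ### Series identities -/

/-- Generic Abel/shift lemma: `(1−q)·Σ a(n+1)qⁿ = Σ (a(n+1)−a(n))qⁿ` when `a 0 = 0`. -/
lemma abel_shift {q : ℂ} (a : ℕ → ℂ) (h0 : a 0 = 0)
    (hs : Summable fun n => a (n+1) * q^n) :
    (1 - q) * ∑' n, a (n+1) * q^n = ∑' n, (a (n+1) - a n) * q^n := by
  have hs' : Summable fun n => a n * q^n := by
    have h1 : Summable fun n => a (n+1) * q^(n+1) := by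
      have := hs.mul_right q
      refine this.congr fun n => ?_
      ring
    exact (summable_nat_add_iff 1).mp h1
  have hq : q * ∑' n, a (n+1) * q^n = ∑' n, a n * q^n := by
    rw [← tsum_mul_left]
    have : ∑' n, a n * q^n = a 0 * q^0 + ∑' n, a (n+1) * q^(n+1) := Summable.tsum_eq_zero_add hs'
    rw [this, h0]
    simp only [zero_mul, zero_add]
    exact (tsum_congr fun n => by ring).symm
  have hsub : Summable fun n => (a (n+1) - a n) * q^n := by
    refine ((hs.sub hs').congr fun n => ?_)
    ring
  rw [sub_mul, one_mul, hq, ← Summable.tsum_sub hs hs']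
  exact tsum_congr fun n => by ring

section Series
variable {q : ℂ} (hq : ‖q‖ < 1) (d : ℕ)

include hq

lemma summable_geo_comp {α : Type*} {f : α → ℕ} (hf : Function.Injective f) :
    Summable fun n => q ^ f n := by
  have hg : Summable fun k : ℕ => ‖q‖ ^ k := summable_geometric_of_lt_one (norm_nonneg q) hq
  have : Summable fun n => ‖q‖ ^ f n := hg.comp_injective hf
  refine Summable.of_norm ?_
  simpa [norm_pow] using this

lemma summable_phi : Summable fun p : P => q ^ phi d p := summable_geo_comp hq (phi_inj d)

lemma summable_eHat : Summable fun k => (eHat d k : ℂ) * q ^ k := by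
  refine Summable.of_norm ?_
  have hg : Summable fun k : ℕ => ‖q‖ ^ k := summable_geometric_of_lt_one (norm_nonneg q) hq
  refine hg.of_nonneg_of_le (fun k => norm_nonneg _) fun k => ?_
  rw [norm_mul, norm_pow]
  have h1 : ‖(eHat d k : ℂ)‖ ≤ 1 := by
    rw [Complex.norm_natCast]
    exact_mod_cast eHat_le_one d k
  calc ‖(eHat d k : ℂ)‖ * ‖q‖ ^ k ≤ 1 * ‖q‖ ^ k := by
        apply mul_le_mul_of_nonneg_right h1 (by positivity)
  _ = ‖q‖ ^ k := one_mul _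

/-- regrouping: `Σ_m (q^{A m} − q^{B m}) = (1−q) · Σ_k ê(k) q^k`. -/
lemma block_regroup :
    ∑' m : ℕ, (q ^ A d m - q ^ B d m) = (1 - q) * ∑' k, (eHat d k : ℂ) * q ^ k := by
  have hsupp : Function.support (fun k => (eHat d k : ℂ) * q ^ k) ⊆ Set.range (phi d) := by
    intro k hk
    simp only [Function.mem_support, ne_eq] at hk
    rcases Classical.em (∃ p : P, phi d p = k) with h | h
    · obtain ⟨p, rfl⟩ := h; exact Set.mem_range_self p
    · exact absurd (by rw [eHat_eq_zero d k h]; simp) hk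
  have step1 : ∑' k, (eHat d k : ℂ) * q ^ k = ∑' p : P, q ^ phi d p := by
    rw [← Function.Injective.tsum_eq (phi_inj d) hsupp]
    exact (tsum_congr fun p => by rw [eHat_phi]; simp).symm
  have step2 : ∑' p : P, q ^ phi d p = ∑' m : ℕ, ∑ i ∈ Finset.range (2*m+1), q ^ (A d m + i) := by
    have hsum : Summable fun p : P => q ^ phi d p := summable_phi hq d
    rw [Summable.tsum_sigma hsum]
    refine tsum_congr fun m => ?_
    rw [tsum_fintype]
    rw [← Fin.sum_univ_eq_sum_range (fun i => q ^ (A d m + i)) (2*m+1)]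
    exact Finset.sum_congr rfl fun i _ => by rw [phi_def]
  rw [step1, step2, ← tsum_mul_left]
  refine tsum_congr fun m => ?_
  symm
  have geom : (1 - q) * ∑ i ∈ Finset.range (2*m+1), q ^ i = 1 - q ^ (2*m+1) := by
    have := geom_sum_mul q (2*m+1)
    calc (1 - q) * ∑ i ∈ Finset.range (2*m+1), q ^ i
        = -((∑ i ∈ Finset.range (2*m+1), q ^ i) * (q - 1)) := by ring
    _ = -(q ^ (2*m+1) - 1) := by rw [this]
    _ = 1 - q ^ (2*m+1) := by ring
  have : ∑ i ∈ Finset.range (2*m+1), q ^ (A d m + i)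
      = q ^ A d m * ∑ i ∈ Finset.range (2*m+1), q ^ i := by
    rw [Finset.mul_sum]
    exact Finset.sum_congr rfl fun i _ => by rw [pow_add]
  rw [this, B]
  calc (1 - q) * (q ^ A d m * ∑ i ∈ Finset.range (2*m+1), q ^ i)
      = q ^ A d m * ((1-q) * ∑ i ∈ Finset.range (2*m+1), q ^ i) := by ring
  _ = q ^ A d m * (1 - q ^ (2*m+1)) := by rw [geom]
  _ = q ^ A d m - q ^ (A d m + (2*m+1)) := by rw [pow_add]; ring

lemma hC_split : hC (2*(d+1)) q = ∑' m : ℕ, (q ^ A d m - q ^ B d m) := by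
  have hodd : ¬ Odd (2*(d+1)) := by simp [Nat.odd_iff]
  set f : ℤ → ℂ := fun n => (eps (2*(d+1)) n : ℂ) * q ^ (hExp (2*(d+1)) n).toNat with hf
  have hpos : (fun m : ℕ => f (m : ℤ)) = fun m => q ^ A d m := by
    funext m
    rw [hf]
    simp only
    rw [hExp_nat d m, eps, if_neg hodd, if_pos (by exact_mod_cast Nat.zero_le m)]
    simp [Int.toNat_natCast]
  have hneg : (fun m : ℕ => f (-((m : ℤ)+1))) = fun m => -(q ^ B d m) := by
    funext m
    rw [hf]
    simp only
    rw [hExp_neg d m, eps, if_neg hodd, if_neg (by omega)]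
    simp [Int.toNat_natCast]
  have hsA : Summable fun m : ℕ => q ^ A d m := summable_geo_comp hq (A_mono d).injective
  have hsB : Summable fun m : ℕ => q ^ B d m := summable_geo_comp hq (B_mono d).injective
  have h1 : Summable fun m : ℕ => f (m : ℤ) := by rw [hpos]; exact hsA
  have h2 : Summable fun m : ℕ => f (-((m : ℤ)+1)) := by rw [hneg]; exact hsB.neg
  have := tsum_of_nat_of_neg_add_one h1 h2
  rw [hC]
  rw [← hf, this, hpos, hneg, tsum_neg, Summable.tsum_sub hsA hsB]
  ring

lemma summable_np1_geo : Summable fun n : ℕ => ((n:ℝ)+1) * ‖q‖^n := by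
  have h1 : Summable fun n : ℕ => (n:ℝ)^1 * ‖q‖^n :=
    summable_pow_mul_geometric_of_norm_lt_one 1 (by simpa using hq)
  have h2 : Summable fun n : ℕ => ‖q‖^n := summable_geometric_of_lt_one (norm_nonneg q) hq
  refine ((h1.add h2).congr fun n => ?_)
  simp; ring

lemma summable_E : Summable fun n : ℕ => (E d (n+1) : ℂ) * q^n := by
  refine Summable.of_norm ?_
  refine (summable_np1_geo hq).of_nonneg_of_le (fun n => norm_nonneg _) fun n => ?_
  rw [norm_mul, norm_pow, Complex.norm_natCast]
  have : (E d (n+1) : ℝ) ≤ (n:ℝ)+1 := by exact_mod_cast E_le d (n+1)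
  apply mul_le_mul_of_nonneg_right this (by positivity)

lemma summable_np1C : Summable fun n : ℕ => ((n:ℂ)+1) * q^n := by
  refine Summable.of_norm ?_
  refine (summable_np1_geo hq).of_nonneg_of_le (fun n => norm_nonneg _) fun n => ?_
  rw [norm_mul, norm_pow]
  apply mul_le_mul_of_nonneg_right _ (by positivity)
  rw [show ((n:ℂ)+1) = (((n+1:ℕ)) : ℂ) by push_cast; ring, Complex.norm_natCast]
  push_cast
  exact le_rfl

lemma eHat_series : ∑' k, (eHat d k : ℂ) * q^k = (1-q) * ∑' n : ℕ, (E d (n+1) : ℂ) * q^n := by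
  rw [abel_shift (fun n => (E d n : ℂ)) (show ((E d 0 : ℕ) : ℂ) = 0 by rw [E_zero]; simp)
    (summable_E hq d)]
  refine tsum_congr fun n => ?_
  rw [E_succ]
  push_cast
  ring

lemma np1_series : (1-q)^2 * ∑' n : ℕ, ((n:ℂ)+1) * q^n = 1 := by
  have hq1 : (1:ℂ) - q ≠ 0 := by
    intro h
    have : q = 1 := by linear_combination -h
    rw [this] at hq; simp at hq
  have habel : (1-q) * ∑' n : ℕ, ((n:ℂ)+1) * q^n = ∑' n : ℕ, q^n := by
    have h1 := abel_shift (q := q) (fun n : ℕ => (n:ℂ)) (show ((0:ℕ):ℂ) = 0 by simp)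
      (by refine (summable_np1C hq).congr fun n => by push_cast; ring)
    have h2 : ∑' n : ℕ, ((n:ℂ)+1) * q^n = ∑' n : ℕ, (((n+1:ℕ)):ℂ) * q^n :=
      tsum_congr fun n => by push_cast; ring
    have h3 : ∑' n : ℕ, ((((n+1:ℕ)):ℂ) - ((n:ℕ):ℂ)) * q^n = ∑' n : ℕ, q^n :=
      tsum_congr fun n => by push_cast; ring
    rw [h2, h1, h3]
  have hgeo : ∑' n : ℕ, q^n = (1-q)⁻¹ := tsum_geometric_of_norm_lt_one hq
  calc (1-q)^2 * ∑' n : ℕ, ((n:ℂ)+1) * q^n = (1-q) * ((1-q) * ∑' n : ℕ, ((n:ℂ)+1) * q^n) := by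
        ring
  _ = (1-q) * (1-q)⁻¹ := by rw [habel, hgeo]
  _ = 1 := mul_inv_cancel₀ hq1

lemma master : hC (2*(d+1)) q - 1/((d:ℂ)+1)
    = (1-q)^2 * ∑' n : ℕ, ((E d (n+1) : ℂ) - ((n:ℂ)+1)/((d:ℂ)+1)) * q^n := by
  have hd1 : ((d:ℂ)+1) ≠ 0 := by
    intro h
    have := congrArg Complex.re h
    simp at this
    nlinarith [Nat.cast_nonneg (α := ℝ) d]
  have hmul : ∑' n : ℕ, (((d:ℂ)+1)⁻¹ * (((n:ℂ)+1) * q^n))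
      = (((d:ℂ)+1)⁻¹) * ∑' n : ℕ, ((n:ℂ)+1) * q^n := tsum_mul_left
  have hsplit : ∑' n : ℕ, ((E d (n+1) : ℂ) - ((n:ℂ)+1)/((d:ℂ)+1)) * q^n
      = ∑' n : ℕ, (E d (n+1) : ℂ) * q^n - (((d:ℂ)+1)⁻¹) * ∑' n : ℕ, ((n:ℂ)+1) * q^n := by
    rw [← hmul, ← Summable.tsum_sub (summable_E hq d) ((summable_np1C hq).mul_left _)]
    refine tsum_congr fun n => ?_
    field_simp
  rw [hsplit, mul_sub, ← mul_assoc, mul_comm ((1-q)^2) (((d:ℂ)+1)⁻¹), mul_assoc,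
    np1_series hq, mul_one]
  rw [hC_split hq d, block_regroup hq d, eHat_series hq d]
  rw [one_div]
  ring

end Series

/-! ### Norm estimates -/

/-- the coefficient whose norm we control -/
noncomputable def dC (d : ℕ) (n : ℕ) : ℂ := (E d (n+1) : ℂ) - ((n:ℂ)+1)/((d:ℂ)+1)

lemma norm_dC (d n : ℕ) : ‖dC d n‖ = |(E d (n+1) : ℝ) - ((n:ℝ)+1) / (d+1)| := by
  have : dC d n = (((E d (n+1) : ℝ) - ((n:ℝ)+1) / (d+1) : ℝ) : ℂ) := by
    unfold dC; push_cast; ring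
  rw [this, Complex.norm_real, Real.norm_eq_abs]

section Bound
variable {q : ℂ} (hq : ‖q‖ < 1) (d : ℕ)
include hq

lemma np1_geo_tsum : ∑' n : ℕ, ((n:ℝ)+1) * ‖q‖^n = (1-‖q‖)⁻¹^2 := by
  have hr : 0 ≤ ‖q‖ := norm_nonneg q
  have hr1 : ‖q‖ < 1 := hq
  have habs : ‖(‖q‖:ℝ)‖ < 1 := by rwa [Real.norm_of_nonneg hr]
  have h1 : ∑' n : ℕ, (n:ℝ) * ‖q‖^n = ‖q‖ / (1-‖q‖)^2 :=
    tsum_coe_mul_geometric_of_norm_lt_one habs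
  have h2 : ∑' n : ℕ, ‖q‖^n = (1-‖q‖)⁻¹ := tsum_geometric_of_lt_one hr hq
  have hs1 : Summable fun n : ℕ => (n:ℝ) * ‖q‖^n := by
    have := summable_pow_mul_geometric_of_norm_lt_one (R := ℝ) 1 habs
    exact this.congr fun n => by simp
  have hs2 : Summable fun n : ℕ => ‖q‖^n := summable_geometric_of_lt_one hr hq
  have : ∑' n : ℕ, ((n:ℝ)+1) * ‖q‖^n
      = (∑' n : ℕ, (n:ℝ) * ‖q‖^n) + ∑' n : ℕ, ‖q‖^n := by
    rw [← Summable.tsum_add hs1 hs2]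
    exact tsum_congr fun n => by ring
  have hne : 1 - ‖q‖ ≠ 0 := by intro h; nlinarith
  rw [this, h1, h2]
  generalize ‖q‖ = r at hne ⊢
  field_simp
  ring

lemma tail_bound (M : ℕ) (ε' : ℝ) (hε' : 0 ≤ ε')
    (hM : ∀ n, M ≤ n → ‖dC d n‖ ≤ ε' * ((n:ℝ)+1)) :
    ‖∑' n : ℕ, dC d n * q^n‖
      ≤ (∑ j ∈ Finset.range M, ‖dC d j‖) * (1-‖q‖)⁻¹ + ε' * (1-‖q‖)⁻¹^2 := by
  set K : ℝ := ∑ j ∈ Finset.range M, ‖dC d j‖ with hK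
  have hK0 : 0 ≤ K := Finset.sum_nonneg fun j _ => norm_nonneg _
  have hpt : ∀ n : ℕ, ‖dC d n * q^n‖ ≤ (K + ε' * ((n:ℝ)+1)) * ‖q‖^n := by
    intro n
    rw [norm_mul, norm_pow]
    apply mul_le_mul_of_nonneg_right _ (by positivity)
    rcases Nat.lt_or_ge n M with h | h
    · have h1 : ‖dC d n‖ ≤ K :=
        Finset.single_le_sum (f := fun j => ‖dC d j‖) (fun j _ => norm_nonneg _)
          (Finset.mem_range.mpr h)
      have : (0:ℝ) ≤ ε' * ((n:ℝ)+1) := by positivity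
      linarith
    · have h1 := hM n h
      linarith
  have hsmaj : Summable fun n : ℕ => (K + ε' * ((n:ℝ)+1)) * ‖q‖^n := by
    have hs1 : Summable fun n : ℕ => K * ‖q‖^n :=
      (summable_geometric_of_lt_one (norm_nonneg q) hq).mul_left K
    have hs2 : Summable fun n : ℕ => ε' * (((n:ℝ)+1) * ‖q‖^n) :=
      (summable_np1_geo hq).mul_left ε'
    exact ((hs1.add hs2).congr fun n => by ring)
  have hsnorm : Summable fun n : ℕ => ‖dC d n * q^n‖ :=
    hsmaj.of_nonneg_of_le (fun n => norm_nonneg _) hpt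
  calc ‖∑' n : ℕ, dC d n * q^n‖ ≤ ∑' n : ℕ, ‖dC d n * q^n‖ := norm_tsum_le_tsum_norm hsnorm
  _ ≤ ∑' n : ℕ, (K + ε' * ((n:ℝ)+1)) * ‖q‖^n := Summable.tsum_le_tsum hpt hsnorm hsmaj
  _ = K * ∑' n : ℕ, ‖q‖^n + ε' * ∑' n : ℕ, ((n:ℝ)+1) * ‖q‖^n := by
      have hs1 : Summable fun n : ℕ => K * ‖q‖^n :=
        (summable_geometric_of_lt_one (norm_nonneg q) hq).mul_left K
      have hs2 : Summable fun n : ℕ => ε' * (((n:ℝ)+1) * ‖q‖^n) :=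
        (summable_np1_geo hq).mul_left ε'
      rw [← tsum_mul_left, ← tsum_mul_left, ← Summable.tsum_add hs1 hs2]
      exact tsum_congr fun n => by ring
  _ = K * (1-‖q‖)⁻¹ + ε' * (1-‖q‖)⁻¹^2 := by
      rw [tsum_geometric_of_lt_one (norm_nonneg q) hq, np1_geo_tsum hq]

end Bound

end HbAux

open HbAux in
/-- For even `b ≥ 2` and any ray `h = t·e^{iθ}`, `θ ∈ (−π/2, π/2)`, as `t → 0⁺` one has
`h_b(e^{−h}) → 2/b`: the false theta function `h_b` has the limiting value `2/b` at `q = 1`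
radially along any ray in the right half `h`-plane. -/
theorem hb_even_limit (b : ℕ) (hb : 2 ≤ b) (hbeven : Even b) (θ : ℝ)
    (hθ : θ ∈ Set.Ioo (-(Real.pi / 2)) (Real.pi / 2)) :
    Filter.Tendsto
      (fun t : ℝ => hC b (Complex.exp (-((t : ℂ) * Complex.exp (θ * Complex.I)))))
      (nhdsWithin 0 (Set.Ioi 0))
      (nhds (2 / (b : ℂ))) := by
  obtain ⟨k, hk⟩ := hbeven
  obtain ⟨d, hd⟩ : ∃ d, b = 2*(d+1) := ⟨k - 1, by omega⟩
  subst hd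
  have hdC : ((d:ℂ)+1) ≠ 0 := Nat.cast_add_one_ne_zero d
  have hlim : (2 : ℂ) / ((2*(d+1) : ℕ) : ℂ) = 1/((d:ℂ)+1) := by
    push_cast
    field_simp
  rw [hlim]
  have hcos : 0 < Real.cos θ := Real.cos_pos_of_mem_Ioo hθ
  have hcos1 : Real.cos θ ≤ 1 := Real.cos_le_one θ
  rw [Metric.tendsto_nhdsWithin_nhds]
  intro ε hε
  set ε' : ℝ := ε * (Real.cos θ)^2 / 64 with hε'def
  have hε'pos : 0 < ε' := by positivity
  obtain ⟨M, hM⟩ := E_asymp d hε'pos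
  set K : ℝ := ∑ j ∈ Finset.range M, ‖dC d j‖ with hKdef
  have hK0 : 0 ≤ K := Finset.sum_nonneg fun j _ => norm_nonneg _
  clear_value ε' K
  refine ⟨min 1 (ε * Real.cos θ / (16 * (K+1))), by positivity, ?_⟩
  intro t ht hdist
  rw [Real.dist_eq, sub_zero] at hdist
  have ht0 : 0 < t := ht
  have htabs : |t| = t := abs_of_pos ht0
  rw [htabs] at hdist
  have ht1 : t ≤ 1 := le_of_lt (lt_of_lt_of_le hdist (min_le_left _ _))
  have htK : t < ε * Real.cos θ / (16 * (K+1)) := lt_of_lt_of_le hdist (min_le_right _ _)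
  set h : ℂ := (t : ℂ) * Complex.exp (θ * Complex.I) with hhdef
  set q : ℂ := Complex.exp (-h) with hqdef
  set u : ℝ := t * Real.cos θ with hudef
  have hu0 : 0 < u := by positivity
  have hu1 : u ≤ 1 := by
    calc u ≤ 1 * 1 := by
          apply mul_le_mul ht1 hcos1 (le_of_lt hcos) (by norm_num)
    _ = 1 := by norm_num
  clear_value u
  have hre : (-h).re = -u := by
    rw [hhdef]
    simp [Complex.mul_re, Complex.exp_ofReal_mul_I_re, Complex.exp_ofReal_mul_I_im, hudef]
  have hnq : ‖q‖ = Real.exp (-u) := by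
    rw [hqdef, Complex.norm_exp, hre]
  have hq1 : ‖q‖ < 1 := by
    rw [hnq]
    exact Real.exp_lt_one_iff.mpr (by linarith)
  have hgap : u/2 ≤ 1 - ‖q‖ := by
    rw [hnq]
    have h1 : Real.exp (-u) * Real.exp u = 1 := by rw [← Real.exp_add]; simp
    have h2 : 1 + u ≤ Real.exp u := by linarith [Real.add_one_le_exp u]
    have h3 : 0 < Real.exp (-u) := Real.exp_pos _
    nlinarith [mul_le_mul_of_nonneg_left h2 (le_of_lt h3)]
  have hgap0 : 0 < 1 - ‖q‖ := by linarith
  have hinv : (1 - ‖q‖)⁻¹ ≤ 2/u := by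
    rw [inv_le_iff_one_le_mul₀ hgap0]
    rw [div_mul_eq_mul_div, le_div_iff₀ hu0]
    nlinarith
  have hinv0 : 0 ≤ (1 - ‖q‖)⁻¹ := le_of_lt (inv_pos.mpr hgap0)
  have habs_h : ‖-h‖ = t := by
    rw [hhdef]
    simp only [norm_neg, norm_mul, Complex.norm_real, Complex.norm_exp]
    simp [htabs]
  have h1q : ‖1 - q‖ ≤ 2*t := by
    have := Complex.norm_exp_sub_one_le (x := -h) (by rw [habs_h]; exact ht1)
    rw [habs_h] at this
    calc ‖1 - q‖ = ‖Complex.exp (-h) - 1‖ := by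
          rw [norm_sub_rev, hqdef]
    _ ≤ 2*t := this
  have h1q0 : 0 ≤ ‖1-q‖ := norm_nonneg _
  have hMn : ∀ n, M ≤ n → ‖dC d n‖ ≤ ε' * ((n:ℝ)+1) := by
    intro n hn
    rw [norm_dC]
    exact hM n hn
  have hbound := tail_bound hq1 d M ε' (le_of_lt hε'pos) hMn
  rw [← hKdef] at hbound
  rw [dist_eq_norm, master hq1 d]
  rw [norm_mul, norm_pow]
  have hKbd : ‖1-q‖^2 * ‖∑' n : ℕ, ((E d (n+1) : ℂ) - ((n:ℂ)+1)/((d:ℂ)+1)) * q^n‖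
      ≤ (2*t)^2 * (K * (2/u) + ε' * (2/u)^2) := by
    have hdceq : (fun n : ℕ => ((E d (n+1) : ℂ) - ((n:ℂ)+1)/((d:ℂ)+1)) * q^n)
        = fun n : ℕ => dC d n * q^n := by
      funext n; rw [dC]
    rw [hdceq]
    have hsum0 : 0 ≤ ‖∑' n : ℕ, dC d n * q^n‖ := norm_nonneg _
    have hrhs : K * (1-‖q‖)⁻¹ + ε' * (1-‖q‖)⁻¹^2 ≤ K * (2/u) + ε' * (2/u)^2 := by
      have h2u : 0 ≤ 2/u := by positivity
      have hsq : (1-‖q‖)⁻¹^2 ≤ (2/u)^2 := by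
        apply pow_le_pow_left₀ hinv0 hinv
      have := mul_le_mul_of_nonneg_left hinv hK0
      have := mul_le_mul_of_nonneg_left hsq (le_of_lt hε'pos)
      linarith
    calc ‖1-q‖^2 * ‖∑' n : ℕ, dC d n * q^n‖
        ≤ (2*t)^2 * ‖∑' n : ℕ, dC d n * q^n‖ := by
          apply mul_le_mul_of_nonneg_right _ hsum0
          apply pow_le_pow_left₀ h1q0 h1q
    _ ≤ (2*t)^2 * (K * (1-‖q‖)⁻¹ + ε' * (1-‖q‖)⁻¹^2) := by
          apply mul_le_mul_of_nonneg_left hbound (by positivity)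
    _ ≤ (2*t)^2 * (K * (2/u) + ε' * (2/u)^2) := by
          apply mul_le_mul_of_nonneg_left hrhs (by positivity)
  have hfinal : (2*t)^2 * (K * (2/u) + ε' * (2/u)^2) < ε := by
    have hexp1 : (2*t)^2 * (K * (2/u)) = 8*K*t/(Real.cos θ) := by
      rw [hudef]
      field_simp
      ring
    have hexp2 : (2*t)^2 * (ε' * (2/u)^2) = ε/4 := by
      rw [hudef, hε'def]
      field_simp
      ring
    have hterm1 : 8*K*t/(Real.cos θ) ≤ ε/2 := by
      rw [div_le_iff₀ hcos]
      have h16 : 0 < 16 * (K+1) := by positivity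
      have : t * (16*(K+1)) < ε * Real.cos θ := by
        rw [lt_div_iff₀ h16] at htK
        linarith [mul_lt_mul_of_pos_right htK h16]
      nlinarith
    calc (2*t)^2 * (K * (2/u) + ε' * (2/u)^2)
        = 8*K*t/(Real.cos θ) + ε/4 := by rw [← hexp1, ← hexp2]; ring
    _ ≤ ε/2 + ε/4 := by linarith
    _ < ε := by linarith
  calc ‖1-q‖^2 * ‖∑' n : ℕ, ((E d (n+1) : ℂ) - ((n:ℂ)+1)/((d:ℂ)+1)) * q^n‖
      ≤ (2*t)^2 * (K * (2/u) + ε' * (2/u)^2) := hKbd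
  _ < ε := hfinal
end

section
/- Let b ≥ 3 be an odd integer. Then h_b(e^{−h}) > 0 for all sufficiently small real h > 0, and lim_{h→0⁺} h · log(h_b(e^{−h})) = −π²/(2b). In particular this limit lies in π²·ℚ. -/
/-- `h_b(q) = Σ_{n∈ℤ} ε_b(n) q^{b n(n+1)/2 − n}` for real `q` (absolutely convergent for
`|q| < 1`; the exponents are nonnegative integers). -/
noncomputable def hR (b : ℕ) (q : ℝ) : ℝ :=
  ∑' n : ℤ, (eps b n : ℝ) * q ^ (hExp b n).toNat

open Complex Real Filter Topology

lemma hExp_two_mul (b : ℕ) (n : ℤ) : 2 * hExp b n = (b:ℤ) * (n * (n + 1)) - 2 * n := by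
  have he : Even ((b:ℤ) * (n * (n + 1))) := (Int.even_mul_succ_self n).mul_left b
  rw [hExp, mul_sub, Int.two_mul_ediv_two_of_even he]

lemma hExp_nonneg (b : ℕ) (hb : 1 ≤ b) (n : ℤ) : 0 ≤ hExp b n := by
  have h1 : 0 ≤ n * (n + 1) := by
    rcases le_or_gt 0 n with h | h
    · positivity
    · nlinarith
  have h2 : 0 ≤ n * (n - 1) := by
    rcases le_or_gt 1 n with h | h
    · exact mul_nonneg (by omega) (by omega)
    · nlinarith
  have hb' : (1:ℤ) ≤ (b:ℤ) := by exact_mod_cast hb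
  have := hExp_two_mul b n
  nlinarith [le_mul_of_one_le_left h1 hb']

noncomputable def zZ (b : ℕ) (h : ℝ) : ℂ := 1/2 + (h*((b:ℝ)-2)/(4*π)) * I
noncomputable def tZ (b : ℕ) (h : ℝ) : ℂ := (((b:ℝ)*h/(2*π) : ℝ) : ℂ) * I

lemma term_eq (b : ℕ) (hb : 3 ≤ b) (hbodd : Odd b) (h : ℝ) (n : ℤ) :
    (((eps b n : ℝ) * rexp (-h) ^ (hExp b n).toNat : ℝ) : ℂ)
      = jacobiTheta₂_term n (zZ b h) (tZ b h) := by
  have hπ : (π:ℂ) ≠ 0 := Complex.ofReal_ne_zero.2 pi_ne_zero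
  have hcast : ((hExp b n).toNat : ℝ) = ((hExp b n : ℤ) : ℝ) := by
    exact_mod_cast Int.toNat_of_nonneg (hExp_nonneg b (by omega) n)
  have he2 : ((hExp b n : ℤ):ℝ) = ((b:ℝ)*((n:ℝ)*((n:ℝ)+1)) - 2*(n:ℝ))/2 := by
    have h2 := congrArg (fun z : ℤ => (z:ℝ)) (hExp_two_mul b n)
    push_cast at h2
    linarith
  have hpow : rexp (-h) ^ (hExp b n).toNat = rexp (-(h * ((hExp b n : ℤ):ℝ))) := by
    rw [← Real.exp_nat_mul, hcast]; ring_nf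
  have harg : 2*π*I*(n:ℂ)*(zZ b h) + π*I*(n:ℂ)^2*(tZ b h)
      = (n:ℂ)*(π*I) + ((-(h * ((hExp b n : ℤ):ℝ)) : ℝ) : ℂ) := by
    rw [zZ, tZ]
    push_cast [he2]
    field_simp
    ring_nf
    simp only [Complex.I_sq]
    ring
  have heps : ((eps b n : ℝ) : ℂ) = cexp ((n:ℂ)*(π*I)) := by
    rw [Complex.exp_int_mul, Complex.exp_pi_mul_I, eps, if_pos hbodd]
    rcases Int.even_or_odd n with he | ho
    · rw [if_pos he, he.neg_one_zpow]; norm_num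
    · rw [if_neg (Int.not_even_iff_odd.2 ho), ho.neg_one_zpow]; norm_num
  rw [jacobiTheta₂_term, harg, Complex.exp_add, Complex.ofReal_mul, hpow, heps,
    ← Complex.ofReal_exp]

lemma hR_eq_theta (b : ℕ) (hb : 3 ≤ b) (hbodd : Odd b) (h : ℝ) :
    ((hR b (rexp (-h)) : ℝ) : ℂ) = jacobiTheta₂ (zZ b h) (tZ b h) := by
  rw [hR, Complex.ofReal_tsum, jacobiTheta₂]
  exact tsum_congr fun n => term_eq b hb hbodd h n

noncomputable def wZ (b : ℕ) (h : ℝ) : ℂ :=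
  ((((b:ℝ)-2)/(2*(b:ℝ)) : ℝ) : ℂ) - ((π/((b:ℝ)*h) : ℝ) : ℂ)*I
noncomputable def tZ' (b : ℕ) (h : ℝ) : ℂ := ((2*π/((b:ℝ)*h) : ℝ) : ℂ)*I

section calc1
variable (b : ℕ) (hb : 3 ≤ b) {h : ℝ} (hh : 0 < h)
include hb hh

lemma tZ_ne : tZ b h ≠ 0 := by
  have hbR : (0:ℝ) < (b:ℝ) := by positivity
  rw [tZ]
  exact mul_ne_zero (Complex.ofReal_ne_zero.2 (by positivity)) Complex.I_ne_zero

lemma div_zZ_tZ : zZ b h / tZ b h = wZ b h := by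
  have hbR : (0:ℝ) < (b:ℝ) := by positivity
  rw [div_eq_iff (tZ_ne b hb hh)]
  rw [zZ, tZ, wZ]
  have hπ : (π:ℂ) ≠ 0 := Complex.ofReal_ne_zero.2 pi_ne_zero
  have hhC : (h:ℂ) ≠ 0 := Complex.ofReal_ne_zero.2 hh.ne'
  have hbC : ((b:ℕ):ℂ) ≠ 0 := Nat.cast_ne_zero.2 (by omega)
  push_cast
  field_simp
  ring_nf
  simp only [Complex.I_sq]
  ring

lemma neg_one_div_tZ : -1 / tZ b h = tZ' b h := by
  have hbR : (0:ℝ) < (b:ℝ) := by positivity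
  rw [div_eq_iff (tZ_ne b hb hh)]
  rw [tZ, tZ']
  have hπ : (π:ℂ) ≠ 0 := Complex.ofReal_ne_zero.2 pi_ne_zero
  have hhC : (h:ℂ) ≠ 0 := Complex.ofReal_ne_zero.2 hh.ne'
  have hbC : ((b:ℕ):ℂ) ≠ 0 := Nat.cast_ne_zero.2 (by omega)
  push_cast
  field_simp
  ring_nf
  simp only [Complex.I_sq]

lemma factor1 : (1 : ℂ) / (-I * tZ b h) ^ (1/2 : ℂ)
    = ((Real.sqrt ((b:ℝ)*h/(2*π)))⁻¹ : ℝ) := by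
  have hbR : (0:ℝ) < (b:ℝ) := by positivity
  have hs : (0:ℝ) ≤ (b:ℝ)*h/(2*π) := by positivity
  have h1 : -I * tZ b h = (((b:ℝ)*h/(2*π) : ℝ) : ℂ) := by
    rw [tZ]
    push_cast
    ring_nf
    simp only [Complex.I_sq]
    ring
  rw [h1, show ((1:ℂ)/2) = ((1/2 : ℝ) : ℂ) by norm_num, ← Complex.ofReal_cpow hs,
    ← Real.sqrt_eq_rpow, one_div, ← Complex.ofReal_inv]

lemma factor2 : cexp (-π*I*(zZ b h)^2/(tZ b h))
    = ((rexp (-π^2/(2*(b:ℝ)*h) + h*((b:ℝ)-2)^2/(8*(b:ℝ))) : ℝ) : ℂ)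
      * cexp (((-(π*(((b:ℝ)-2)/(2*(b:ℝ)))) : ℝ) : ℂ)*I) := by
  have hbR : (0:ℝ) < (b:ℝ) := by positivity
  have hπ : (π:ℂ) ≠ 0 := Complex.ofReal_ne_zero.2 pi_ne_zero
  have hhC : (h:ℂ) ≠ 0 := Complex.ofReal_ne_zero.2 hh.ne'
  have hbC : ((b:ℕ):ℂ) ≠ 0 := Nat.cast_ne_zero.2 (by omega)
  have harg : -π*I*(zZ b h)^2/(tZ b h)
      = ((-π^2/(2*(b:ℝ)*h) + h*((b:ℝ)-2)^2/(8*(b:ℝ)) : ℝ) : ℂ)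
        + ((-(π*(((b:ℝ)-2)/(2*(b:ℝ)))) : ℝ) : ℂ)*I := by
    rw [div_eq_iff (tZ_ne b hb hh), zZ, tZ]
    push_cast
    field_simp
    ring_nf
    simp only [show (I:ℂ)^3 = -I from by rw [pow_succ, Complex.I_sq]; ring, Complex.I_sq]
    field_simp
    ring
  rw [harg, Complex.exp_add, ← Complex.ofReal_exp]

end calc1

lemma int_sq_sub_self_nonneg (n : ℤ) : (0:ℝ) ≤ (n:ℝ)^2 - n := by
  have h2 : (0:ℤ) ≤ n^2 - n := by
    rcases le_or_gt 1 n with h | h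
    · nlinarith
    · nlinarith
  exact_mod_cast h2

lemma theta_norm (b : ℕ) (h : ℝ) (n : ℤ) :
    ‖jacobiTheta₂_term n (wZ b h) (tZ' b h)‖
      = rexp (-(2*π^2/((b:ℝ)*h)) * ((n:ℝ)^2 - n)) := by
  rw [norm_jacobiTheta₂_term, wZ, tZ']
  simp only [Complex.sub_im, Complex.ofReal_im, Complex.mul_im, Complex.ofReal_re,
    Complex.I_im, Complex.I_re, mul_one, mul_zero, add_zero, zero_sub, zero_mul]
  congr 1
  ring

lemma theta_term_one (b : ℕ) (h : ℝ) :
    jacobiTheta₂_term 1 (wZ b h) (tZ' b h)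
      = cexp (2*π*I*((((b:ℝ)-2)/(2*(b:ℝ)) : ℝ) : ℂ)) := by
  rw [jacobiTheta₂_term, wZ, tZ']
  congr 1
  push_cast
  ring_nf

lemma tendsto_t (b : ℕ) (hb : 3 ≤ b) :
    Tendsto (fun h : ℝ => 2*π^2/((b:ℝ)*h)) (𝓝[>] (0:ℝ)) atTop := by
  have hbR : (0:ℝ) < (b:ℝ) := by positivity
  have h2 := tendsto_inv_nhdsGT_zero.const_mul_atTop
    (show (0:ℝ) < 2*π^2/(b:ℝ) by positivity)
  refine h2.congr fun h => ?_
  rw [← div_div]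
  ring

lemma theta_tendsto (b : ℕ) (hb : 3 ≤ b) :
    Tendsto (fun h : ℝ => jacobiTheta₂ (wZ b h) (tZ' b h)) (𝓝[>] (0:ℝ))
      (𝓝 (1 + cexp (2*π*I*((((b:ℝ)-2)/(2*(b:ℝ)) : ℝ) : ℂ)))) := by
  have hbR : (0:ℝ) < (b:ℝ) := by positivity
  set c : ℝ := ((b:ℝ)-2)/(2*(b:ℝ)) with hc
  set g : ℤ → ℂ := fun n => if n = 0 then 1 else if n = 1 then cexp (2*π*I*(c:ℂ)) else 0
    with hg
  have base : Summable (fun n : ℤ => rexp (-((n:ℝ)^2 - |(n:ℝ)|))) := by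
    have hs := summable_pow_mul_jacobiTheta₂_term_bound (1/(2*π)) (T := 1/π)
      (by positivity) 0
    refine hs.congr fun n => ?_
    rw [pow_zero, one_mul]
    congr 1
    push_cast
    field_simp
  have hsum : Summable (fun n : ℤ => rexp (-((n:ℝ)^2 - n))) := by
    refine Summable.of_nonneg_of_le (fun n => (Real.exp_pos _).le)
      (fun n => Real.exp_le_exp.2 ?_) base
    nlinarith [le_abs_self ((n:ℝ))]
  have hlim : ∀ n : ℤ, Tendsto (fun h : ℝ => jacobiTheta₂_term n (wZ b h) (tZ' b h))
      (𝓝[>] (0:ℝ)) (𝓝 (g n)) := by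
    intro n
    rcases eq_or_ne n 0 with rfl | h0
    · simp only [hg, if_pos rfl]
      refine tendsto_const_nhds.congr fun h => ?_
      rw [jacobiTheta₂_term]
      norm_num
    rcases eq_or_ne n 1 with rfl | h1
    · simp only [hg, if_neg h0, if_pos rfl]
      exact tendsto_const_nhds.congr fun h => (theta_term_one b h).symm
    · simp only [hg, if_neg h0, if_neg h1]
      apply squeeze_zero_norm (fun h => (theta_norm b h n).le)
      have hn2 : (2:ℝ) ≤ (n:ℝ)^2 - n := by
        have h2 : (2:ℤ) ≤ n^2 - n := by
          rcases lt_or_ge n 0 with h | h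
          · nlinarith
          · have : 2 ≤ n := by omega
            nlinarith
        exact_mod_cast h2
      have hB : Tendsto (fun h : ℝ => -(2*π^2/((b:ℝ)*h)) * ((n:ℝ)^2 - n))
          (𝓝[>] (0:ℝ)) atBot := by
        have h3 := (tendsto_t b hb).atTop_mul_const (by linarith : (0:ℝ) < (n:ℝ)^2 - n)
        refine (tendsto_neg_atTop_atBot.comp h3).congr fun h => ?_
        simp only [Function.comp_apply]
        ring
      exact Real.tendsto_exp_atBot.comp hB
  have hbound : ∀ᶠ h in 𝓝[>] (0:ℝ), ∀ n : ℤ,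
      ‖jacobiTheta₂_term n (wZ b h) (tZ' b h)‖ ≤ rexp (-((n:ℝ)^2 - n)) := by
    filter_upwards [(tendsto_t b hb).eventually_ge_atTop 1] with h hh1 n
    rw [theta_norm]
    apply Real.exp_le_exp.2
    nlinarith [int_sq_sub_self_nonneg n]
  have hmain := tendsto_tsum_of_dominated_convergence hsum hlim hbound
  have htsum : ∑' n, g n = 1 + cexp (2*π*I*(c:ℂ)) := by
    rw [tsum_eq_sum (s := {0,1}) (fun n hn => by
      simp only [Finset.mem_insert, Finset.mem_singleton, not_or] at hn
      simp [hg, hn.1, hn.2])]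
    rw [Finset.sum_pair (by decide : (0:ℤ) ≠ 1)]
    simp [hg]
  rw [← htsum]
  exact hmain

lemma phase_eq (b : ℕ) (hb : 3 ≤ b) :
    cexp (((-(π*(((b:ℝ)-2)/(2*(b:ℝ)))) : ℝ) : ℂ)*I)
      * (1 + cexp (2*π*I*((((b:ℝ)-2)/(2*(b:ℝ)) : ℝ) : ℂ)))
    = ((2 * Real.sin (π/(b:ℝ)) : ℝ) : ℂ) := by
  have hbR : (0:ℝ) < (b:ℝ) := by positivity
  set θ : ℝ := π*(((b:ℝ)-2)/(2*(b:ℝ))) with hθ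
  have h2 : cexp (((-θ : ℝ) : ℂ)*I) * (1 + cexp (2*π*I*((((b:ℝ)-2)/(2*(b:ℝ)) : ℝ) : ℂ)))
      = cexp (((-θ : ℝ) : ℂ)*I) + cexp ((θ:ℂ)*I) := by
    rw [mul_add, mul_one, ← Complex.exp_add]
    congr 2
    rw [hθ]
    push_cast
    ring
  rw [h2, Complex.exp_mul_I, Complex.exp_mul_I]
  push_cast
  rw [Complex.cos_neg, Complex.sin_neg]
  have hcos : Complex.cos (θ:ℂ) = ((Real.cos θ : ℝ) : ℂ) := (Complex.ofReal_cos θ).symm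
  rw [hcos]
  have hθ2 : θ = π/2 - π/(b:ℝ) := by
    rw [hθ]
    field_simp
  rw [hθ2, Real.cos_pi_div_two_sub]
  push_cast
  ring

lemma master (b : ℕ) (hb : 3 ≤ b) (hbodd : Odd b) {h : ℝ} (hh : 0 < h) :
    hR b (rexp (-h)) = (Real.sqrt ((b:ℝ)*h/(2*π)))⁻¹
      * rexp (-π^2/(2*(b:ℝ)*h) + h*((b:ℝ)-2)^2/(8*(b:ℝ)))
      * (cexp (((-(π*(((b:ℝ)-2)/(2*(b:ℝ)))) : ℝ) : ℂ)*I)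
          * jacobiTheta₂ (wZ b h) (tZ' b h)).re := by
  have key : ((hR b (rexp (-h)) : ℝ) : ℂ)
      = ((((Real.sqrt ((b:ℝ)*h/(2*π)))⁻¹
          * rexp (-π^2/(2*(b:ℝ)*h) + h*((b:ℝ)-2)^2/(8*(b:ℝ))) : ℝ)) : ℂ)
        * (cexp (((-(π*(((b:ℝ)-2)/(2*(b:ℝ)))) : ℝ) : ℂ)*I)
            * jacobiTheta₂ (wZ b h) (tZ' b h)) := by
    rw [hR_eq_theta b hb hbodd h, jacobiTheta₂_functional_equation (zZ b h) (tZ b h),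
      div_zZ_tZ b hb hh, neg_one_div_tZ b hb hh, factor1 b hb hh, factor2 b hb hh]
    push_cast
    ring
  have h3 := congrArg Complex.re key
  rwa [Complex.ofReal_re, Complex.re_ofReal_mul] at h3

/-- For odd `b ≥ 3`: `h_b(e^{−h}) > 0` for all sufficiently small real `h > 0`, and
`lim_{h→0⁺} h·log(h_b(e^{−h})) = −π²/(2b)`; in particular this limit lies in `π²·ℚ`. -/
theorem hb_odd_log_asymptotics (b : ℕ) (hb : 3 ≤ b) (hbodd : Odd b) :
    (∀ᶠ h in nhdsWithin (0 : ℝ) (Set.Ioi 0), 0 < hR b (Real.exp (-h))) ∧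
    Filter.Tendsto (fun h : ℝ => h * Real.log (hR b (Real.exp (-h))))
      (nhdsWithin 0 (Set.Ioi 0)) (nhds (-(Real.pi ^ 2 / (2 * (b : ℝ))))) ∧
    ∃ r : ℚ, -(Real.pi ^ 2 / (2 * (b : ℝ))) = Real.pi ^ 2 * (r : ℝ) := by
  have hbR : (0:ℝ) < (b:ℝ) := by positivity
  set L : ℝ := 2 * Real.sin (π/(b:ℝ)) with hL
  have hLpos : 0 < L := by
    have h1 : 0 < π/(b:ℝ) := by positivity
    have h2 : π/(b:ℝ) < π := by
      rw [div_lt_iff₀ hbR]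
      nlinarith [pi_pos, show (3:ℝ) ≤ (b:ℝ) by exact_mod_cast hb]
    exact mul_pos two_pos (Real.sin_pos_of_pos_of_lt_pi h1 h2)
  set u : ℝ → ℝ := fun h => (cexp (((-(π*(((b:ℝ)-2)/(2*(b:ℝ)))) : ℝ) : ℂ)*I)
      * jacobiTheta₂ (wZ b h) (tZ' b h)).re with hu_def
  have hu : Tendsto u (𝓝[>] (0:ℝ)) (𝓝 L) := by
    have h1 : Tendsto (fun h : ℝ => cexp (((-(π*(((b:ℝ)-2)/(2*(b:ℝ)))) : ℝ) : ℂ)*I)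
        * jacobiTheta₂ (wZ b h) (tZ' b h)) (𝓝[>] (0:ℝ))
        (𝓝 (((2 * Real.sin (π/(b:ℝ)) : ℝ) : ℂ))) := by
      have h0 := (tendsto_const_nhds (x := cexp (((-(π*(((b:ℝ)-2)/(2*(b:ℝ)))) : ℝ) : ℂ)*I))
        (f := 𝓝[>] (0:ℝ))).mul (theta_tendsto b hb)
      rwa [phase_eq b hb] at h0
    exact (Complex.continuous_re.tendsto _).comp h1
  have hupos : ∀ᶠ h in 𝓝[>] (0:ℝ), 0 < u h := hu.eventually (eventually_gt_nhds hLpos)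
  have hhpos : ∀ᶠ h in 𝓝[>] (0:ℝ), 0 < h :=
    eventually_mem_nhdsWithin.mono fun h hh => hh
  -- positivity part
  have part1 : ∀ᶠ h in 𝓝[>] (0:ℝ), 0 < hR b (Real.exp (-h)) := by
    filter_upwards [hupos, hhpos] with h h1 h2
    rw [master b hb hbodd h2]
    have hs : 0 < Real.sqrt ((b:ℝ)*h/(2*π)) := Real.sqrt_pos.2 (by positivity)
    exact mul_pos (mul_pos (inv_pos.2 hs) (Real.exp_pos _)) h1
  refine ⟨part1, ?_, ⟨-(1/(2*(b:ℚ))), by push_cast; ring⟩⟩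
  -- limit part
  have T3 : Tendsto (fun h : ℝ => h * Real.log (u h)) (𝓝[>] (0:ℝ)) (𝓝 0) := by
    have hid : Tendsto (fun h : ℝ => h) (𝓝[>] (0:ℝ)) (𝓝 0) :=
      tendsto_id.mono_left nhdsWithin_le_nhds
    have hlog : Tendsto (fun h : ℝ => Real.log (u h)) (𝓝[>] (0:ℝ)) (𝓝 (Real.log L)) :=
      ((Real.continuousAt_log hLpos.ne').tendsto).comp hu
    simpa using hid.mul hlog
  have T1 : Tendsto (fun h : ℝ => h * Real.log ((Real.sqrt ((b:ℝ)*h/(2*π)))⁻¹))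
      (𝓝[>] (0:ℝ)) (𝓝 0) := by
    have hxlogx : Tendsto (fun h : ℝ => Real.log h * h) (𝓝[>] (0:ℝ)) (𝓝 0) := by
      have := tendsto_log_mul_rpow_nhdsGT_zero (r := 1) one_pos
      refine this.congr fun h => ?_
      rw [Real.rpow_one]
    have hconst : Tendsto (fun h : ℝ => h * Real.log ((b:ℝ)/(2*π))) (𝓝[>] (0:ℝ)) (𝓝 0) := by
      have hid : Tendsto (fun h : ℝ => h) (𝓝[>] (0:ℝ)) (𝓝 0) :=
        tendsto_id.mono_left nhdsWithin_le_nhds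
      simpa using hid.mul (tendsto_const_nhds (x := Real.log ((b:ℝ)/(2*π))))
    have hcomb : Tendsto (fun h : ℝ => -(1/2) * (h * Real.log ((b:ℝ)/(2*π)) + Real.log h * h))
        (𝓝[>] (0:ℝ)) (𝓝 (-(1/2) * (0 + 0))) :=
      (tendsto_const_nhds).mul (hconst.add hxlogx)
    rw [show (-(1/2) * ((0:ℝ) + 0)) = 0 by ring] at hcomb
    refine Tendsto.congr' ?_ hcomb
    filter_upwards [hhpos] with h hh
    rw [Real.log_inv, Real.log_sqrt (by positivity),
      show (b:ℝ)*h/(2*π) = ((b:ℝ)/(2*π)) * h by ring,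
      Real.log_mul (by positivity) hh.ne']
    ring
  have T2 : Tendsto (fun h : ℝ =>
      h * (-π^2/(2*(b:ℝ)*h) + h*((b:ℝ)-2)^2/(8*(b:ℝ))))
      (𝓝[>] (0:ℝ)) (𝓝 (-(π^2/(2*(b:ℝ))))) := by
    have hc : Tendsto (fun h : ℝ => -(π^2/(2*(b:ℝ))) + h^2*((b:ℝ)-2)^2/(8*(b:ℝ)))
        (𝓝[>] (0:ℝ)) (𝓝 (-(π^2/(2*(b:ℝ))) + 0^2*((b:ℝ)-2)^2/(8*(b:ℝ)))) := by
      apply Tendsto.add tendsto_const_nhds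
      have hid : Tendsto (fun h : ℝ => h) (𝓝[>] (0:ℝ)) (𝓝 0) :=
        tendsto_id.mono_left nhdsWithin_le_nhds
      exact ((hid.pow 2).mul_const _).div_const _
    rw [show -(π^2/(2*(b:ℝ))) + (0:ℝ)^2*((b:ℝ)-2)^2/(8*(b:ℝ)) = -(π^2/(2*(b:ℝ))) by ring]
      at hc
    refine Tendsto.congr' ?_ hc
    filter_upwards [hhpos] with h hh
    field_simp
  have Tcomb := (T1.add T2).add T3
  rw [show ((0:ℝ) + -(π^2/(2*(b:ℝ))) + 0) = -(π^2/(2*(b:ℝ))) by ring] at Tcomb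
  refine Tendsto.congr' ?_ Tcomb
  filter_upwards [hupos, hhpos] with h h1 h2
  have hs : 0 < Real.sqrt ((b:ℝ)*h/(2*π)) := Real.sqrt_pos.2 (by positivity)
  rw [master b hb hbodd h2, Real.log_mul (by positivity) h1.ne',
    Real.log_mul (by positivity) (Real.exp_ne_zero _), Real.log_exp]
  ring
end

section
/- Let b ≥ 2 be an even integer. Then h_b(e^{−h}) > 0 for all sufficiently small real h > 0, and lim_{h→0⁺} h · log(h_b(e^{−h})) = 0. In particular this limit lies in π²·ℚ. -/
open Real Filter Topology

lemma hExp_even_eq (c : ℕ) (n : ℤ) : hExp (c + c) n = (c : ℤ) * (n * (n + 1)) - n := by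
  unfold hExp
  have h2 : ((c + c : ℕ) : ℤ) * (n * (n + 1)) = 2 * ((c : ℤ) * (n * (n + 1))) := by
    push_cast; ring
  rw [h2, Int.mul_ediv_cancel_left _ two_ne_zero]

lemma hExp_ge_natAbs (c : ℕ) (hc : 1 ≤ c) (n : ℤ) : (n.natAbs : ℤ) ≤ hExp (c + c) n := by
  rw [hExp_even_eq]
  have hc' : (1 : ℤ) ≤ (c : ℤ) := by exact_mod_cast hc
  rcases le_or_gt 0 n with h | h
  · rw [Int.natAbs_of_nonneg h]
    rcases eq_or_lt_of_le h with rfl | h1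
    · simp
    · have h1' : (1 : ℤ) ≤ n := h1
      nlinarith [mul_le_mul_of_nonneg_right hc' (mul_nonneg h (show (0:ℤ) ≤ n + 1 by linarith)),
        mul_le_mul_of_nonneg_right h1' h]
  · rw [Int.ofNat_natAbs_of_nonpos h.le]
    have hp : 0 ≤ n * (n + 1) := by
      have := mul_nonneg (show (0:ℤ) ≤ -n by omega) (show (0:ℤ) ≤ -(n + 1) by omega)
      rwa [neg_mul_neg] at this
    have := mul_nonneg (show (0:ℤ) ≤ (c:ℤ) by positivity) hp
    linarith

lemma summable_aux {q : ℝ} (hq0 : 0 < q) (hq1 : q < 1) :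
    Summable fun n : ℤ => q ^ n.natAbs := by
  apply Summable.of_nat_of_neg_add_one
  · simpa using summable_geometric_of_lt_one hq0.le hq1
  · have : (fun n : ℕ => q ^ (-(n + 1) : ℤ).natAbs) = fun n : ℕ => q * q ^ n := by
      funext n
      have : (-(n + 1) : ℤ).natAbs = n + 1 := by omega
      rw [this, pow_succ, mul_comm]
    rw [this]
    exact (summable_geometric_of_lt_one hq0.le hq1).mul_left q

lemma hR_bounds (b : ℕ) (hb : 2 ≤ b) (hbeven : Even b) {q : ℝ} (hq0 : 0 < q) (hq1 : q < 1) :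
    1 - q ≤ hR b q ∧ hR b q ≤ (1 - q)⁻¹ := by
  obtain ⟨c, rfl⟩ := hbeven
  have hc : 1 ≤ c := by omega
  have hodd : ¬ Odd (c + c) := by simp [Nat.not_odd_iff_even]
  set f : ℤ → ℝ := fun n => (eps (c + c) n : ℝ) * q ^ (hExp (c + c) n).toNat with hf_def
  -- summability of f
  have habs : ∀ n : ℤ, ‖f n‖ ≤ q ^ n.natAbs := by
    intro n
    have heps : |((eps (c + c) n : ℤ) : ℝ)| = 1 := by
      simp only [eps, if_neg hodd]
      rcases le_or_gt 0 n with h | h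
      · simp [h]
      · simp [not_le.mpr h]
    have hle : n.natAbs ≤ (hExp (c + c) n).toNat := by
      have := hExp_ge_natAbs c hc n
      omega
    calc ‖f n‖ = |((eps (c + c) n : ℤ) : ℝ)| * |q ^ (hExp (c + c) n).toNat| := by
          rw [hf_def]; simp [abs_mul]
      _ = q ^ (hExp (c + c) n).toNat := by
          rw [heps, one_mul, abs_of_nonneg (pow_nonneg hq0.le _)]
      _ ≤ q ^ n.natAbs := pow_le_pow_of_le_one hq0.le hq1.le hle
  have hf : Summable f := (summable_aux hq0 hq1).of_norm_bounded habs
  -- the paired sequence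
  have hEm : ∀ m : ℕ, 0 ≤ hExp (c + c) (m : ℤ) ∧ (m : ℤ) ≤ hExp (c + c) (m : ℤ) := by
    intro m
    have := hExp_ge_natAbs c hc (m : ℤ)
    simp only [Int.natAbs_natCast] at this
    exact ⟨le_trans (Int.ofNat_nonneg m) this, this⟩
  have hneg : ∀ m : ℕ, hExp (c + c) (-(m + 1)) = hExp (c + c) (m : ℤ) + (2 * m + 1) := by
    intro m
    rw [hExp_even_eq, hExp_even_eq]
    ring
  have hg_eq : ∀ m : ℕ, f m + f (-(m + 1)) =
      q ^ (hExp (c + c) (m : ℤ)).toNat - q ^ ((hExp (c + c) (m : ℤ)).toNat + (2 * m + 1)) := by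
    intro m
    have h1 : eps (c + c) (m : ℤ) = 1 := by
      unfold eps
      rw [if_neg hodd, if_pos (Int.ofNat_nonneg m)]
    have h2 : eps (c + c) (-(m + 1)) = -1 := by
      unfold eps
      rw [if_neg hodd, if_neg (by omega : ¬ (0 : ℤ) ≤ -((m : ℤ) + 1))]
    have h3 : (hExp (c + c) (-(m + 1))).toNat = (hExp (c + c) (m : ℤ)).toNat + (2 * m + 1) := by
      have := hneg m
      have h0 := (hEm m).1
      omega
    rw [hf_def]
    simp only [h1, h2, h3]
    push_cast
    ring
  have hg : Summable (fun m : ℕ => f m + f (-(m + 1))) := hf.nat_add_neg_add_one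
  have htsum : ∑' m : ℕ, (f m + f (-(m + 1))) = hR (c + c) q := tsum_nat_add_neg_add_one hf
  have hg_nonneg : ∀ m : ℕ, 0 ≤ f m + f (-(m + 1)) := by
    intro m
    rw [hg_eq m]
    have : q ^ ((hExp (c + c) (m : ℤ)).toNat + (2 * m + 1)) ≤ q ^ (hExp (c + c) (m : ℤ)).toNat :=
      pow_le_pow_of_le_one hq0.le hq1.le (by omega)
    linarith
  have hg0 : f ((0 : ℕ) : ℤ) + f (-(((0 : ℕ) : ℤ) + 1)) = 1 - q := by
    rw [hg_eq 0]
    have h0 : hExp (c + c) ((0 : ℕ) : ℤ) = 0 := by rw [hExp_even_eq]; simp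
    rw [h0]
    norm_num
  constructor
  · rw [← htsum]
    have hle := Summable.le_tsum hg 0 fun j _ => hg_nonneg j
    calc 1 - q = f ((0 : ℕ) : ℤ) + f (-(((0 : ℕ) : ℤ) + 1)) := hg0.symm
      _ ≤ ∑' m : ℕ, (f m + f (-(m + 1))) := hle
  · rw [← htsum, ← tsum_geometric_of_lt_one hq0.le hq1]
    refine Summable.tsum_le_tsum (fun m => ?_) hg (summable_geometric_of_lt_one hq0.le hq1)
    rw [hg_eq m]
    have h1 : q ^ (hExp (c + c) (m : ℤ)).toNat ≤ q ^ m := by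
      refine pow_le_pow_of_le_one hq0.le hq1.le ?_
      have := (hEm m).2
      omega
    have h2 : 0 ≤ q ^ ((hExp (c + c) (m : ℤ)).toNat + (2 * m + 1)) := pow_nonneg hq0.le _
    linarith

/-- For even `b ≥ 2`: `h_b(e^{−h}) > 0` for all sufficiently small real `h > 0`, and
`lim_{h→0⁺} h·log(h_b(e^{−h}))` = 0`; in particular this limit lies in `π²·ℚ`. -/
theorem hb_even_log_asymptotics (b : ℕ) (hb : 2 ≤ b) (hbeven : Even b) :
    (∀ᶠ h in nhdsWithin (0 : ℝ) (Set.Ioi 0), 0 < hR b (Real.exp (-h))) ∧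
    Filter.Tendsto (fun h : ℝ => h * Real.log (hR b (Real.exp (-h))))
      (nhdsWithin 0 (Set.Ioi 0)) (nhds 0) ∧
    ∃ r : ℚ, (0 : ℝ) = Real.pi ^ 2 * (r : ℝ) := by
  have key : ∀ h : ℝ, 0 < h →
      1 - Real.exp (-h) ≤ hR b (Real.exp (-h)) ∧
      hR b (Real.exp (-h)) ≤ (1 - Real.exp (-h))⁻¹ := by
    intro h hh
    exact hR_bounds b hb hbeven (Real.exp_pos _) (Real.exp_lt_one_iff.mpr (by linarith))
  have hpos : ∀ h : ℝ, 0 < h → 0 < hR b (Real.exp (-h)) := by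
    intro h hh
    have h1 : Real.exp (-h) < 1 := Real.exp_lt_one_iff.mpr (by linarith)
    linarith [(key h hh).1]
  refine ⟨?_, ?_, ⟨0, by simp⟩⟩
  · filter_upwards [self_mem_nhdsWithin] with h hh
    exact hpos h hh
  · -- squeeze
    have hbound : ∀ᶠ h in nhdsWithin (0 : ℝ) (Set.Ioi 0),
        ‖h * Real.log (hR b (Real.exp (-h)))‖ ≤ h * Real.log 2 - h * Real.log h := by
      have hmem : Set.Ioc (0 : ℝ) 1 ∈ nhdsWithin (0 : ℝ) (Set.Ioi 0) :=
        Ioc_mem_nhdsGT_of_mem (by constructor <;> norm_num)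
      filter_upwards [hmem] with h hh
      obtain ⟨hh0, hh1⟩ := hh
      have hq0 : (0 : ℝ) < Real.exp (-h) := Real.exp_pos _
      have hq1 : Real.exp (-h) < 1 := Real.exp_lt_one_iff.mpr (by linarith)
      -- 1 - exp(-h) ≥ h/2
      have hexp : Real.exp (-h) ≤ 1 - h / 2 := by
        have h1 : h + 1 ≤ Real.exp h := Real.add_one_le_exp h
        have h2 : Real.exp (-h) = (Real.exp h)⁻¹ := Real.exp_neg h
        have h3 : (Real.exp h)⁻¹ ≤ (1 + h)⁻¹ := by
          apply inv_anti₀ (by linarith)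
          linarith
        have h4 : (1 + h)⁻¹ ≤ 1 - h / 2 := by
          rw [inv_le_iff_one_le_mul₀ (by linarith)]
          nlinarith
        linarith
      have hhalf : h / 2 ≤ 1 - Real.exp (-h) := by linarith
      have hhalfpos : (0 : ℝ) < h / 2 := by linarith
      have hHRpos : 0 < hR b (Real.exp (-h)) := hpos h hh0
      obtain ⟨hlow, hhigh⟩ := key h hh0
      -- |log hR| ≤ -log(1 - q)
      have h1mq : (0 : ℝ) < 1 - Real.exp (-h) := by linarith
      have hlog1 : Real.log (1 - Real.exp (-h)) ≤ Real.log (hR b (Real.exp (-h))) :=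
        Real.log_le_log h1mq hlow
      have hlog2 : Real.log (hR b (Real.exp (-h))) ≤ -Real.log (1 - Real.exp (-h)) := by
        calc Real.log (hR b (Real.exp (-h))) ≤ Real.log ((1 - Real.exp (-h))⁻¹) :=
              Real.log_le_log hHRpos hhigh
          _ = -Real.log (1 - Real.exp (-h)) := Real.log_inv _
      have hlogmono : Real.log (h / 2) ≤ Real.log (1 - Real.exp (-h)) :=
        Real.log_le_log hhalfpos hhalf
      have habslog : |Real.log (hR b (Real.exp (-h)))| ≤ -Real.log (h / 2) := by
        rw [abs_le]
        constructor
        · linarith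
        · linarith
      have hlogh2 : Real.log (h / 2) = Real.log h - Real.log 2 := by
        rw [Real.log_div (ne_of_gt hh0) (by norm_num)]
      rw [Real.norm_eq_abs, abs_mul, abs_of_pos hh0]
      calc h * |Real.log (hR b (Real.exp (-h)))| ≤ h * (-Real.log (h / 2)) := by
            apply mul_le_mul_of_nonneg_left habslog hh0.le
        _ = h * Real.log 2 - h * Real.log h := by rw [hlogh2]; ring
    refine squeeze_zero_norm' hbound ?_
    have t1 : Filter.Tendsto (fun h : ℝ => h * Real.log h)
        (nhdsWithin 0 (Set.Ioi 0)) (nhds 0) := by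
      have := (Real.continuous_mul_log.tendsto 0).mono_left
        (nhdsWithin_le_nhds (s := Set.Ioi (0 : ℝ)))
      simpa using this
    have t2 : Filter.Tendsto (fun h : ℝ => h * Real.log 2)
        (nhdsWithin 0 (Set.Ioi 0)) (nhds 0) := by
      have hc : Continuous (fun h : ℝ => h * Real.log 2) := by continuity
      have := (hc.tendsto (0 : ℝ)).mono_left (nhdsWithin_le_nhds (s := Set.Ioi (0 : ℝ)))
      simpa using this
    simpa using t2.sub t1
end

section
/- As formal power series in ℤ[[q]]: (q)_∞ · Σ_{a≥0} q^{a² + a} / (q)_a = h_5(q). (This is the second Rogers–Ramanujan identity in the theta-function form used for tails: removing the q-binomial factor from the tail double sum of the pretzel knot P(3,3,2) yields h_5².) -/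
/-- `h_b(q) = Σ_{n∈ℤ} ε_b(n) q^{b n(n+1)/2 − n}` in `ℤ[[q]]`. -/
noncomputable def hSeries (b : ℕ) : PowerSeries ℤ :=
  PowerSeries.mk fun m => ∑' n : ℤ, if hExp b n = (m : ℤ) then eps b n else 0

/-- The finite `q`-Pochhammer symbol `(q)_n = Π_{k=1}^{n} (1 − q^k)` in `ℤ[[q]]`. -/
noncomputable def qPoch (n : ℕ) : PowerSeries ℤ :=
  ∏ k ∈ Finset.range n, (1 - (PowerSeries.X : PowerSeries ℤ) ^ (k + 1))

/-- The multiplicative inverse `1/(q)_n` in `ℤ[[q]]` (the constant coefficient of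
`(q)_n` is `1`, so it is invertible). -/
noncomputable def qPochInv (n : ℕ) : PowerSeries ℤ :=
  PowerSeries.invOfUnit (qPoch n) 1

/-- `(q)_∞ = Π_{k≥1} (1 − q^k) ∈ ℤ[[q]]`: the coefficient of `q^m` equals the coefficient
of `q^m` in any partial product `(q)_N` with `N > m`. -/
noncomputable def qPochInf : PowerSeries ℤ :=
  PowerSeries.mk fun m => PowerSeries.coeff (R := ℤ) m (qPoch (m + 1))

/-- The sum `Σ_i F_i` of a family of power series, convergent in the formal power series
topology: the coefficient of `q^m` is the (finite) sum of the `q^m`-coefficients. -/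
noncomputable def seriesSum {ι : Type*} (F : ι → PowerSeries ℤ) : PowerSeries ℤ :=
  PowerSeries.mk fun m => ∑' i, PowerSeries.coeff (R := ℤ) m (F i)

noncomputable section
open PowerSeries Finset

abbrev R2 := PowerSeries ℤ

/-- `X^e` for integer `e`, interpreted as `0` when `e < 0`. -/
def XP (e : ℤ) : PowerSeries ℤ := if 0 ≤ e then (PowerSeries.X : PowerSeries ℤ) ^ e.toNat else 0

/-- Gaussian binomial `[N; k]_q` as a power series, lower index an integer. -/
def gb : ℕ → ℤ → PowerSeries ℤ
  | 0, k => if k = 0 then 1 else 0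
  | (N+1), k => gb N (k-1) + XP k * gb N k

lemma XP_ofNat (n : ℕ) : XP (n : ℤ) = PowerSeries.X ^ n := by
  simp [XP]

lemma XP_zero : XP 0 = 1 := by simp [XP]

lemma XP_neg {e : ℤ} (h : e < 0) : XP e = 0 := by simp [XP, not_le.2 h]

lemma XP_add {a b : ℤ} (ha : 0 ≤ a) (hb : 0 ≤ b) : XP (a + b) = XP a * XP b := by
  simp [XP, ha, hb, add_nonneg ha hb, Int.toNat_add ha hb, pow_add]

lemma gb_neg : ∀ (N : ℕ) {k : ℤ}, k < 0 → gb N k = 0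
  | 0, k, h => by simp [gb, h.ne]
  | (N+1), k, h => by
      rw [gb, gb_neg N (by omega), gb_neg N h, XP_neg h]; ring

lemma gb_zero (N : ℕ) : gb N 0 = 1 := by
  induction N with
  | zero => simp [gb]
  | succ N ih => rw [gb, gb_neg N (by norm_num), ih, XP_zero]; ring

lemma gb_gt : ∀ (N : ℕ) {k : ℤ}, (N : ℤ) < k → gb N k = 0
  | 0, k, h => by simp [gb]; omega
  | (N+1), k, h => by
      rw [gb, gb_gt N (by omega), gb_gt N (by omega)]; ring


lemma gb_succ (N : ℕ) (k : ℤ) : gb (N+1) k = gb N (k-1) + XP k * gb N k := rfl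

lemma gb_pascal2 : ∀ (N : ℕ) (k : ℤ), gb (N+1) k = XP ((N:ℤ)+1-k) * gb N (k-1) + gb N k
  | 0, k => by
      rcases eq_or_ne k 0 with rfl | h0
      · simp [gb_succ, gb_zero, gb_neg, XP_zero]
      rcases eq_or_ne k 1 with rfl | h1
      · rw [gb_succ, show (1:ℤ)-1=0 by ring, gb_zero, show gb 0 (1:ℤ) = 0 by simp [gb],
          show ((0:ℕ):ℤ)+1-1 = 0 by norm_num, XP_zero]
        ring
      · have h2 : gb 0 (k-1) = 0 := by simp [gb]; omega
        have h3 : gb 0 k = 0 := by simp [gb, h0]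
        rw [gb_succ, h2, h3]; ring
  | (N+1), k => by
      have key : XP k * (XP ((N:ℤ)+1-k) * gb N (k-1)) = XP ((N:ℤ)+2-k) * (XP (k-1) * gb N (k-1)) := by
        rcases lt_or_ge k 0 with hk | hk
        · rw [XP_neg hk, XP_neg (show k-1 < 0 by omega)]; ring
        rcases eq_or_ne k 0 with rfl | h0
        · rw [gb_neg N (by norm_num)]; ring
        rcases lt_or_ge ((N:ℤ)) (k-1) with hk2 | hk2
        · rw [gb_gt N hk2]; ring
        · have e1 : XP k * XP ((N:ℤ)+1-k) = XP ((N:ℤ)+1) := by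
            rw [← XP_add hk (by omega)]; ring_nf
          have e2 : XP ((N:ℤ)+2-k) * XP (k-1) = XP ((N:ℤ)+1) := by
            rw [← XP_add (by omega) (by omega)]; ring_nf
          rw [← mul_assoc, ← mul_assoc, e1, e2]
      have c1 : ((N:ℤ)+1)+1-k = (N:ℤ)+2-k := by ring
      have c2 : (N:ℤ)+1-(k-1) = (N:ℤ)+2-k := by ring
      calc gb (N+1+1) k = gb (N+1) (k-1) + XP k * gb (N+1) k := rfl
        _ = (XP ((N:ℤ)+2-k) * gb N (k-1-1) + gb N (k-1))
            + XP k * (XP ((N:ℤ)+1-k) * gb N (k-1) + gb N k) := by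
              rw [gb_pascal2 N (k-1), gb_pascal2 N k, c2]
        _ = (XP ((N:ℤ)+2-k) * gb N (k-1-1) + gb N (k-1) + XP k * gb N k)
            + XP k * (XP ((N:ℤ)+1-k) * gb N (k-1)) := by ring
        _ = (XP ((N:ℤ)+2-k) * gb N (k-1-1) + gb N (k-1) + XP k * gb N k)
            + XP ((N:ℤ)+2-k) * (XP (k-1) * gb N (k-1)) := by rw [key]
        _ = XP ((N:ℤ)+2-k) * (gb N (k-1-1) + XP (k-1) * gb N (k-1))
            + (gb N (k-1) + XP k * gb N k) := by ring
        _ = XP (((N:ℕ)+1:ℤ)+1-k) * gb (N+1) (k-1) + gb (N+1) k := by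
              rw [gb_succ N (k-1), gb_succ N k]; push_cast [c1]; ring

lemma constCoeff_qPoch (n : ℕ) : PowerSeries.constantCoeff (R := ℤ) (qPoch n) = 1 := by
  unfold qPoch
  rw [map_prod]
  apply Finset.prod_eq_one
  intro k _
  simp

lemma qPoch_mul_inv (n : ℕ) : qPoch n * qPochInv n = 1 := by
  apply PowerSeries.mul_invOfUnit
  rw [constCoeff_qPoch]; rfl

lemma qPoch_succ (n : ℕ) : qPoch (n+1) = qPoch n * (1 - PowerSeries.X ^ (n+1)) := by
  unfold qPoch
  rw [Finset.prod_range_succ]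

lemma qPochInv_succ (n : ℕ) :
    qPochInv n = qPochInv (n+1) * (1 - PowerSeries.X ^ (n+1)) := by
  have h1 : qPoch n * (qPochInv (n+1) * (1 - PowerSeries.X ^ (n+1))) = 1 := by
    calc qPoch n * (qPochInv (n+1) * (1 - PowerSeries.X ^ (n+1)))
        = (qPoch n * (1 - PowerSeries.X ^ (n+1))) * qPochInv (n+1) := by ring
      _ = qPoch (n+1) * qPochInv (n+1) := by rw [← qPoch_succ]
      _ = 1 := qPoch_mul_inv (n+1)
  calc qPochInv n = qPochInv n * (qPoch n * (qPochInv (n+1) * (1 - PowerSeries.X ^ (n+1)))) := by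
        rw [h1, mul_one]
    _ = (qPoch n * qPochInv n) * (qPochInv (n+1) * (1 - PowerSeries.X ^ (n+1))) := by ring
    _ = qPochInv (n+1) * (1 - PowerSeries.X ^ (n+1)) := by rw [qPoch_mul_inv, one_mul]

lemma qPochInv_succ' (n : ℕ) :
    qPochInv (n+1) = qPochInv n + PowerSeries.X ^ (n+1) * qPochInv (n+1) := by
  rw [qPochInv_succ n]; ring

/-- Coefficients of `1/(q)_r` stabilize in `r`. -/
lemma coeff_qPochInv_stab {k r r' : ℕ} (hk : k ≤ r) (hr : r ≤ r') :
    PowerSeries.coeff (R := ℤ) k (qPochInv r) = PowerSeries.coeff (R := ℤ) k (qPochInv r') := by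
  induction r' with
  | zero => have : r = 0 := by omega
            subst this
            have : k = 0 := by omega
            subst this; rfl
  | succ m ih =>
    rcases Nat.lt_or_ge r (m+1) with h | h
    · have := ih (by omega)
      rw [this, qPochInv_succ' m, map_add]
      have : PowerSeries.coeff (R := ℤ) k (PowerSeries.X ^ (m+1) * qPochInv (m+1)) = 0 := by
        rw [PowerSeries.coeff_X_pow_mul']
        simp only [if_neg (by omega : ¬ (m+1) ≤ k)]
      rw [this, add_zero]
    · have : r = m+1 := by omega
      subst this; rfl

lemma coeff_qPoch_stab {k n n' : ℕ} (hk : k ≤ n) (hn : n ≤ n') :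
    PowerSeries.coeff (R := ℤ) k (qPoch n) = PowerSeries.coeff (R := ℤ) k (qPoch n') := by
  induction n' with
  | zero => have : n = 0 := by omega
            subst this; rfl
  | succ m ih =>
    rcases Nat.lt_or_ge n (m+1) with h | h
    · rw [ih (by omega), qPoch_succ m]
      rw [mul_sub, mul_one, map_sub]
      have : PowerSeries.coeff (R := ℤ) k (qPoch m * PowerSeries.X ^ (m+1)) = 0 := by
        rw [mul_comm, PowerSeries.coeff_X_pow_mul']
        simp only [if_neg (by omega : ¬ (m+1) ≤ k)]
      rw [this, sub_zero]
    · have : n = m+1 := by omega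
      subst this; rfl

lemma coeff_qPochInf {k n : ℕ} (hk : k < n) :
    PowerSeries.coeff (R := ℤ) k qPochInf = PowerSeries.coeff (R := ℤ) k (qPoch n) := by
  unfold qPochInf
  rw [PowerSeries.coeff_mk]
  exact coeff_qPoch_stab (by omega) (by omega)

lemma qPochInv_zero : qPochInv 0 = 1 := by
  have h := qPoch_mul_inv 0
  rwa [show qPoch 0 = 1 by rfl, one_mul] at h

/-- Coefficient `k` of `[N; r]` equals that of `1/(q)_r` once `N ≥ k + r`. -/
lemma coeff_gb (k : ℕ) : ∀ (r N : ℕ), k + r ≤ N →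
    PowerSeries.coeff (R := ℤ) k (gb N (r : ℤ)) = PowerSeries.coeff (R := ℤ) k (qPochInv r) := by
  induction k using Nat.strong_induction_on with
  | _ k IH =>
    intro r
    induction r with
    | zero =>
      intro N _
      simp only [Nat.cast_zero, gb_zero, qPochInv_zero]
    | succ r ihr =>
      intro N hN
      obtain ⟨M, rfl⟩ : ∃ M, N = M + 1 := ⟨N - 1, by omega⟩
      rw [gb_succ, show ((r+1:ℕ):ℤ) - 1 = (r:ℤ) by push_cast; ring]
      rw [map_add, ihr M (by omega)]
      rw [qPochInv_succ' r, map_add]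
      congr 1
      rw [XP_ofNat (r+1)]
      rw [PowerSeries.coeff_X_pow_mul', PowerSeries.coeff_X_pow_mul']
      rcases Nat.lt_or_ge k (r+1) with h | h
      · simp only [if_neg (by omega : ¬ (r+1) ≤ k)]
      · simp only [if_pos h]
        exact IH (k - (r+1)) (by omega) (r+1) M (by omega)

/-- sign `(-1)^j`. -/
def sg (j : ℤ) : ℤ := if Even j then 1 else -1

/-- exponent `j(5j+3)/2`. -/
def ee (j : ℤ) : ℤ := j * (5*j+3) / 2

lemma ee_spec (j : ℤ) : 2 * ee j = j * (5*j+3) := by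
  have h : (2:ℤ) ∣ j * (5*j+3) := by
    rcases Int.even_or_odd j with ⟨k, hk⟩ | ⟨k, hk⟩
    · exact ⟨k * (5*j+3), by rw [hk]; ring⟩
    · exact ⟨j * (5*k+4), by rw [hk]; ring⟩
  rw [ee, Int.mul_ediv_cancel' h]

lemma ee_ge (j : ℤ) : |j| ≤ ee j := by
  have h := ee_spec j
  rcases le_or_gt 0 j with hj | hj
  · rw [abs_of_nonneg hj]; nlinarith [sq_nonneg j]
  · rw [abs_of_neg hj]; nlinarith [mul_nonneg (by omega : (0:ℤ) ≤ -j) (by nlinarith : (0:ℤ) ≤ -(5*j)-3)]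

lemma ee_nonneg (j : ℤ) : 0 ≤ ee j := le_trans (abs_nonneg j) (ee_ge j)

lemma ee_sub (j : ℤ) : ee j - ee (j-1) = 5*j - 1 := by
  have h1 := ee_spec j
  have h2 := ee_spec (j-1)
  have h3 : j * (5*j+3) - (j-1) * (5*(j-1)+3) = 10*j - 2 := by ring
  omega

lemma sg_sub_one (j : ℤ) : sg (j-1) = - sg j := by
  unfold sg
  by_cases h : Even j <;> simp [h, Int.even_sub_one]

/-- The `j`-th term of the theta-side polynomial `E_n`. -/
def TT (n : ℕ) (j : ℤ) : PowerSeries ℤ :=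
  PowerSeries.C (R := ℤ) (sg j) * (XP (ee j) * gb (n+1) (((n:ℤ) - 5*j)/2))

/-- The theta-side polynomial `E_n`. -/
def EE (n : ℕ) : PowerSeries ℤ := ∑ j ∈ Finset.Icc (-(n:ℤ)-1) ((n:ℤ)+1), TT n j

lemma TT_zero {n : ℕ} {j : ℤ} (h : (n:ℤ) + 1 ≤ 5*j ∨ 5*j ≤ -((n:ℤ)+4)) : TT n j = 0 := by
  unfold TT
  rcases h with h | h
  · rw [gb_neg (n+1) (by omega)]; ring
  · rw [gb_gt (n+1) (by push_cast; omega)]; ring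

lemma EE_eq (n : ℕ) {A B : ℤ} (hA : A ≤ -(n:ℤ)-1) (hB : (n:ℤ)+1 ≤ B) :
    EE n = ∑ j ∈ Finset.Icc A B, TT n j := by
  unfold EE
  apply Finset.sum_subset
  · exact Finset.Icc_subset_Icc hA hB
  · intro j hj hnj
    simp only [Finset.mem_Icc] at hj hnj
    apply TT_zero
    omega

/-- The core Pascal computation behind Schur's recursion for the theta side. -/
lemma core (m : ℕ) (k d d' : ℤ) (hd : 0 ≤ d) (hd' : 0 ≤ d')
    (hrel : d = d' + (m:ℤ) + 1 - 2*k) :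
    XP d * gb (m+3) k - XP d' * gb (m+3) (k+2)
    = XP d * gb (m+2) (k-1) - XP d' * gb (m+2) (k+2)
      + XP ((m:ℤ)+2) * (XP d * gb (m+1) (k-1) - XP d' * gb (m+1) (k+1)) := by
  have h1 : gb (m+3) k = gb (m+2) (k-1) + XP k * gb (m+2) k := gb_succ (m+2) k
  have h2 : gb (m+3) (k+2) = XP ((m:ℤ)+1-k) * gb (m+2) (k+1) + gb (m+2) (k+2) := by
    have := gb_pascal2 (m+2) (k+2)
    rw [show ((m+2:ℕ):ℤ)+1-(k+2) = (m:ℤ)+1-k by push_cast; ring,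
        show k+2-1 = k+1 by ring] at this
    exact this
  have h3 : gb (m+2) k = XP ((m:ℤ)+2-k) * gb (m+1) (k-1) + gb (m+1) k := by
    have := gb_pascal2 (m+1) k
    rw [show ((m+1:ℕ):ℤ)+1-k = (m:ℤ)+2-k by push_cast; ring] at this
    exact this
  have h4 : gb (m+2) (k+1) = gb (m+1) k + XP (k+1) * gb (m+1) (k+1) := by
    have := gb_succ (m+1) (k+1)
    rw [show k+1-1 = k by ring] at this
    exact this
  have eA : XP d * (XP k * (XP ((m:ℤ)+2-k) * gb (m+1) (k-1)))
      = XP ((m:ℤ)+2) * (XP d * gb (m+1) (k-1)) := by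
    rcases lt_or_ge k 0 with hk | hk
    · rw [gb_neg (m+1) (by omega)]; ring
    rcases lt_or_ge ((m:ℤ)+2) k with hk2 | hk2
    · rw [gb_gt (m+1) (by push_cast; omega)]; ring
    · rw [show XP k * (XP ((m:ℤ)+2-k) * gb (m+1) (k-1))
          = (XP k * XP ((m:ℤ)+2-k)) * gb (m+1) (k-1) by ring,
        ← XP_add hk (by omega), show k + ((m:ℤ)+2-k) = (m:ℤ)+2 by ring]
      ring
  have eB : XP d * (XP k * gb (m+1) k) = XP d' * (XP ((m:ℤ)+1-k) * gb (m+1) k) := by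
    rcases lt_or_ge k 0 with hk | hk
    · rw [gb_neg (m+1) hk]; ring
    rcases lt_or_ge ((m:ℤ)+1) k with hk2 | hk2
    · rw [gb_gt (m+1) (by push_cast; omega)]; ring
    · rw [← mul_assoc, ← mul_assoc, ← XP_add hd hk, ← XP_add hd' (by omega),
        show d + k = d' + ((m:ℤ)+1-k) by omega]
  have eC : XP d' * (XP ((m:ℤ)+1-k) * (XP (k+1) * gb (m+1) (k+1)))
      = XP ((m:ℤ)+2) * (XP d' * gb (m+1) (k+1)) := by
    rcases lt_or_ge (k+1) 0 with hk | hk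
    · rw [gb_neg (m+1) hk]; ring
    rcases lt_or_ge ((m:ℤ)) k with hk2 | hk2
    · rw [gb_gt (m+1) (by push_cast; omega)]; ring
    · rw [show XP ((m:ℤ)+1-k) * (XP (k+1) * gb (m+1) (k+1))
          = (XP ((m:ℤ)+1-k) * XP (k+1)) * gb (m+1) (k+1) by ring,
        ← XP_add (by omega) hk, show ((m:ℤ)+1-k) + (k+1) = (m:ℤ)+2 by ring]
      ring
  rw [h1, h2, h3, h4]
  linear_combination eA + eB - eC

/-- The paired-terms identity: for `n+2-5j` even, terms `j` and `j-1` jointly satisfy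
the Schur recursion. -/
lemma pair (m : ℕ) (j : ℤ) (hpar : ((m:ℤ)+2 - 5*j) % 2 = 0) :
    TT (m+2) j + TT (m+2) (j-1)
    = TT (m+1) j + TT (m+1) (j-1) + XP ((m:ℤ)+2) * (TT m j + TT m (j-1)) := by
  set k : ℤ := ((m:ℤ)+2-5*j)/2 with hk
  have h2k : 2*k = (m:ℤ)+2-5*j := by omega
  unfold TT
  rw [show (((m+2:ℕ):ℤ) - 5*j)/2 = k by push_cast; omega,
      show (((m+2:ℕ):ℤ) - 5*(j-1))/2 = k+2 by push_cast; omega,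
      show (((m+1:ℕ):ℤ) - 5*j)/2 = k-1 by push_cast; omega,
      show (((m+1:ℕ):ℤ) - 5*(j-1))/2 = k+2 by push_cast; omega,
      show (((m:ℕ):ℤ) - 5*j)/2 = k-1 by omega,
      show (((m:ℕ):ℤ) - 5*(j-1))/2 = k+1 by omega,
      sg_sub_one j, map_neg]
  have hrel : ee j = ee (j-1) + (m:ℤ) + 1 - 2*k := by
    have := ee_sub j; omega
  have hcore := core m k (ee j) (ee (j-1)) (ee_nonneg j) (ee_nonneg (j-1)) hrel
  linear_combination (PowerSeries.C (R := ℤ) (sg j)) * hcore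

/-- The Schur recursion for the theta side (auxiliary, with a parity-adapted bound). -/
lemma EE_rec_aux (m : ℕ) (b : ℤ) (hb1 : (m:ℤ)+3 ≤ b) (hb2 : (b - (m:ℤ)) % 2 = 0) :
    EE (m+2) = EE (m+1) + XP ((m:ℤ)+2) * EE m := by
  set a : ℤ := -(b+1) with ha
  have hE2 := EE_eq (m+2) (A := a) (B := b) (by push_cast; omega) (by push_cast; omega)
  have hE1 := EE_eq (m+1) (A := a) (B := b) (by push_cast; omega) (by push_cast; omega)
  have hE0 := EE_eq m (A := a) (B := b) (by push_cast; omega) (by push_cast; omega)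
  rw [hE2, hE1, hE0, Finset.mul_sum, ← Finset.sum_add_distrib]
  rw [← sub_eq_zero, ← Finset.sum_sub_distrib]
  set Z : ℤ → PowerSeries ℤ :=
    fun j => TT (m+2) j - (TT (m+1) j + XP ((m:ℤ)+2) * TT m j) with hZ
  show ∑ j ∈ Finset.Icc a b, Z j = 0
  have hsplit : Finset.Icc a b
      = (Finset.Icc a b).filter (fun j => ((m:ℤ)+2-5*j) % 2 = 0)
        ∪ (Finset.Icc a b).filter (fun j => ¬ (((m:ℤ)+2-5*j) % 2 = 0)) :=
    (Finset.filter_union_filter_not_eq _ _).symm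
  rw [hsplit, Finset.sum_union (Finset.disjoint_filter_filter_not _ _ _)]
  have hbij : ∑ j ∈ (Finset.Icc a b).filter (fun j => ¬ (((m:ℤ)+2-5*j) % 2 = 0)), Z j
      = ∑ j ∈ (Finset.Icc a b).filter (fun j => ((m:ℤ)+2-5*j) % 2 = 0), Z (j-1) := by
    apply Finset.sum_nbij' (i := fun j => j + 1) (j := fun j => j - 1)
    · intro x hx
      simp only [Finset.mem_filter, Finset.mem_Icc] at hx ⊢
      refine ⟨⟨by omega, by omega⟩, by omega⟩
    · intro x hx
      simp only [Finset.mem_filter, Finset.mem_Icc] at hx ⊢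
      refine ⟨⟨by omega, by omega⟩, by omega⟩
    · intro x _; omega
    · intro x _; omega
    · intro x _; rw [show x + 1 - 1 = x by ring]
  rw [hbij, ← Finset.sum_add_distrib]
  apply Finset.sum_eq_zero
  intro j hj
  simp only [Finset.mem_filter, Finset.mem_Icc] at hj
  have hp := pair m j hj.2
  simp only [hZ]
  linear_combination hp

/-- The Schur recursion for the theta side. -/
lemma EE_rec (m : ℕ) : EE (m+2) = EE (m+1) + XP ((m:ℤ)+2) * EE m := by
  exact EE_rec_aux m ((m:ℤ)+4) (by omega) (by omega)

/-- The sum-side polynomial `c_n = Σ_a q^{a²+a} [n-a; a]`. -/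
def cc (n : ℕ) : PowerSeries ℤ :=
  ∑ a ∈ Finset.range (n+1), PowerSeries.X ^ (a^2+a) * gb (n-a) (a:ℤ)

lemma cc_eq (n : ℕ) {B : ℕ} (hB : n+1 ≤ B) :
    cc n = ∑ a ∈ Finset.range B, PowerSeries.X ^ (a^2+a) * gb (n-a) (a:ℤ) := by
  apply Finset.sum_subset (Finset.range_subset_range.2 hB)
  intro a ha hna
  simp only [Finset.mem_range] at ha hna
  have h1 : n - a = 0 := by omega
  have h2 : gb 0 (a:ℤ) = 0 := by
    simp [gb]; omega
  rw [h1, h2, mul_zero]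

lemma cc_rec (m : ℕ) :
    cc (m+2) = cc (m+1) + PowerSeries.X ^ (m+2) * cc m := by
  set g : ℕ → PowerSeries ℤ := fun a =>
    PowerSeries.X ^ (a^2+a) * (XP ((m:ℤ)+2-2*a) * gb (m+1-a) ((a:ℤ)-1)) with hg
  have split : ∀ a ∈ Finset.range (m+3),
      PowerSeries.X ^ (a^2+a) * gb (m+2-a) (a:ℤ)
      = PowerSeries.X ^ (a^2+a) * gb (m+1-a) (a:ℤ) + g a := by
    intro a ha
    simp only [Finset.mem_range] at ha
    rcases Nat.lt_or_ge a (m+2) with h | h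
    · have hup : m+2-a = (m+1-a)+1 := by omega
      have hp := gb_pascal2 (m+1-a) (a:ℤ)
      rw [show ((↑(m+1-a):ℤ)+1-(a:ℤ)) = (m:ℤ)+2-2*a by omega] at hp
      rw [hup, hp, hg]; ring
    · have ha2 : a = m+2 := by omega
      subst ha2
      have z1 : gb (m+2-(m+2)) ((m+2:ℕ):ℤ) = 0 := by simp [gb]; omega
      have z2 : gb (m+1-(m+2)) ((m+2:ℕ):ℤ) = 0 := by simp [gb]; omega
      rw [z1, z2, hg]
      simp only
      rw [XP_neg (by push_cast; omega)]
      ring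
  have step2 : ∑ a ∈ Finset.range (m+3), g a = PowerSeries.X ^ (m+2) * cc m := by
    rw [Finset.sum_range_succ' g (m+2)]
    have g0 : g 0 = 0 := by
      rw [hg]; simp only
      rw [show ((0:ℕ):ℤ)-1 = -1 by norm_num, gb_neg _ (by norm_num)]
      ring
    rw [g0, add_zero, cc_eq m (B := m+2) (by omega), Finset.mul_sum]
    apply Finset.sum_congr rfl
    intro i hi
    simp only [Finset.mem_range] at hi
    rw [hg]; simp only
    rw [show ((i+1:ℕ):ℤ)-1 = (i:ℤ) by push_cast; ring,
        show m+1-(i+1) = m-i by omega]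
    rcases le_or_gt (2*i) m with h | h
    · rw [show ((m:ℤ)+2-2*(i+1:ℕ)) = ((m-2*i:ℕ):ℤ) by push_cast; omega, XP_ofNat,
          ← mul_assoc, ← mul_assoc, ← pow_add, ← pow_add]
      have h2 : (i+1)^2+(i+1) = i^2+i+(2*i+2) := by ring
      rw [show (i+1)^2+(i+1)+(m-2*i) = m+2+(i^2+i) by omega]
    · rw [XP_neg (by push_cast; omega), gb_gt (m-i) (by omega)]
      ring
  calc cc (m+2) = ∑ a ∈ Finset.range (m+3), PowerSeries.X ^ (a^2+a) * gb (m+2-a) (a:ℤ) := rfl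
    _ = ∑ a ∈ Finset.range (m+3),
          (PowerSeries.X ^ (a^2+a) * gb (m+1-a) (a:ℤ) + g a) := Finset.sum_congr rfl split
    _ = (∑ a ∈ Finset.range (m+3), PowerSeries.X ^ (a^2+a) * gb (m+1-a) (a:ℤ))
        + ∑ a ∈ Finset.range (m+3), g a := Finset.sum_add_distrib
    _ = cc (m+1) + PowerSeries.X ^ (m+2) * cc m := by
        rw [← cc_eq (m+1) (by omega), step2]


lemma cc_zero : cc 0 = 1 := by
  rw [cc, Finset.sum_range_one]
  rw [show ((0:ℕ):ℤ) = 0 by norm_num, gb_zero]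
  ring

lemma cc_one : cc 1 = 1 := by
  rw [cc, Finset.sum_range_succ, Finset.sum_range_one]
  rw [show ((0:ℕ):ℤ) = 0 by norm_num, gb_zero,
      show ((1:ℕ):ℤ) = 1 by norm_num, show (1:ℕ)-1 = 0 by omega,
      show gb 0 (1:ℤ) = 0 by simp [gb]]
  ring

lemma EE_zero : EE 0 = 1 := by
  have h : EE 0 = ∑ j ∈ Finset.Icc (0:ℤ) 0, TT 0 j := by
    unfold EE
    refine (Finset.sum_subset (Finset.Icc_subset_Icc (by norm_num) (by norm_num)) ?_).symm
    intro j hj hnj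
    simp only [Finset.mem_Icc] at hj hnj
    apply TT_zero
    push_cast
    omega
  rw [h, Finset.Icc_self, Finset.sum_singleton]
  unfold TT
  rw [show sg 0 = 1 by rfl, show ee 0 = 0 by rfl, XP_zero,
      show (((0:ℕ):ℤ) - 5*0)/2 = 0 by norm_num, gb_zero, map_one]
  ring

lemma EE_one : EE 1 = 1 := by
  have h : EE 1 = ∑ j ∈ Finset.Icc (0:ℤ) 0, TT 1 j := by
    unfold EE
    refine (Finset.sum_subset (Finset.Icc_subset_Icc (by norm_num) (by norm_num)) ?_).symm
    intro j hj hnj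
    simp only [Finset.mem_Icc] at hj hnj
    apply TT_zero
    push_cast
    omega
  rw [h, Finset.Icc_self, Finset.sum_singleton]
  unfold TT
  rw [show sg 0 = 1 by rfl, show ee 0 = 0 by rfl, XP_zero,
      show (((1:ℕ):ℤ) - 5*0)/2 = 0 by norm_num, gb_zero, map_one]
  ring

/-- The Schur polynomial identity: the sum side equals the theta side. -/
lemma cc_eq_EE : ∀ n, cc n = EE n := by
  intro n
  induction n using Nat.strong_induction_on with
  | _ n IH =>
    match n with
    | 0 => rw [cc_zero, EE_zero]
    | 1 => rw [cc_one, EE_one]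
    | (m+2) =>
      rw [cc_rec, EE_rec, IH (m+1) (by omega), IH m (by omega),
          show ((m:ℤ)+2) = ((m+2:ℕ):ℤ) by push_cast; ring, XP_ofNat]

lemma XP_toNat {e : ℤ} (h : 0 ≤ e) : XP e = PowerSeries.X ^ e.toNat := if_pos h

lemma coeff_S (t N : ℕ) (h : 3*t+1 ≤ N) :
    PowerSeries.coeff (R := ℤ) t (seriesSum (fun a : ℕ =>
      (PowerSeries.X : PowerSeries ℤ) ^ (a ^ 2 + a) * qPochInv a))
    = PowerSeries.coeff (R := ℤ) t (cc N) := by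
  rw [seriesSum, PowerSeries.coeff_mk]
  have hv : ∀ a : ℕ, t < a →
      ∀ (φ : PowerSeries ℤ), PowerSeries.coeff (R := ℤ) t (PowerSeries.X ^ (a^2+a) * φ) = 0 := by
    intro a ha φ
    rw [PowerSeries.coeff_X_pow_mul']
    have : ¬ (a^2+a ≤ t) := by
      have : a ≤ a^2 + a := by omega
      omega
    rw [if_neg this]
  rw [tsum_eq_sum (s := Finset.range (t+1)) (by
    intro a ha
    simp only [Finset.mem_range] at ha
    exact hv a (by omega) _)]
  rw [cc, map_sum]
  rw [← Finset.sum_subset (Finset.range_subset_range.2 (show t+1 ≤ N+1 by omega)) (by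
    intro a ha hna
    simp only [Finset.mem_range] at ha hna
    exact hv a (by omega) _)]
  apply Finset.sum_congr rfl
  intro a ha
  simp only [Finset.mem_range] at ha
  rw [PowerSeries.coeff_X_pow_mul', PowerSeries.coeff_X_pow_mul']
  rcases le_or_gt (a^2+a) t with hle | hlt
  · rw [if_pos hle, if_pos hle]
    exact (coeff_gb (t - (a^2+a)) a (N-a) (by
      have : a ≤ a^2+a := by omega
      omega)).symm
  · rw [if_neg (by omega), if_neg (by omega)]

lemma coeff_almost_one (m : ℕ) (j : ℤ) (hj : |j| ≤ (m:ℤ)) (t : ℕ) (ht : t ≤ m) :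
    PowerSeries.coeff (R := ℤ) t (qPoch (7*m+7) * gb (7*m+7+1) ((((7*m+7:ℕ):ℤ) - 5*j)/2))
    = PowerSeries.coeff (R := ℤ) t (1 : PowerSeries ℤ) := by
  set N : ℕ := 7*m+7 with hN
  set f : ℤ := (((N:ℕ):ℤ) - 5*j)/2 with hf
  have habs : -(m:ℤ) ≤ j ∧ j ≤ (m:ℤ) := abs_le.1 hj
  have hf1 : (m:ℤ) + 3 ≤ f := by rw [hf]; omega
  have hf2 : f ≤ (N:ℤ) := by rw [hf]; omega
  have hfn : ((f.toNat:ℕ):ℤ) = f := Int.toNat_of_nonneg (by omega)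
  rw [PowerSeries.coeff_mul, ← qPoch_mul_inv N, PowerSeries.coeff_mul]
  apply Finset.sum_congr rfl
  rintro ⟨u, v⟩ huv
  rw [Finset.HasAntidiagonal.mem_antidiagonal] at huv
  have hvt : v ≤ t := by omega
  congr 1
  rw [← hfn]
  rw [coeff_gb v f.toNat (N+1) (by omega)]
  exact coeff_qPochInv_stab (by omega) (by omega)

lemma coeff_qPoch_mul_TT (m : ℕ) (j : ℤ) :
    PowerSeries.coeff (R := ℤ) m (qPoch (7*m+7) * TT (7*m+7) j)
    = if ee j = (m:ℤ) then sg j else 0 := by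
  set N : ℕ := 7*m+7 with hN
  rcases le_or_gt (ee j) (m:ℤ) with hle | hlt
  · have hj : |j| ≤ (m:ℤ) := le_trans (ee_ge j) hle
    have h1 : qPoch N * TT N j
        = PowerSeries.C (R := ℤ) (sg j) * (PowerSeries.X ^ (ee j).toNat
          * (qPoch N * gb (N+1) ((((N:ℕ):ℤ) - 5*j)/2))) := by
      rw [TT, XP_toNat (ee_nonneg j)]; ring
    rw [h1, PowerSeries.coeff_C_mul, PowerSeries.coeff_X_pow_mul']
    have htn : (ee j).toNat ≤ m := by
      have := ee_nonneg j; omega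
    rw [if_pos htn]
    rw [coeff_almost_one m j hj _ (by omega), PowerSeries.coeff_one]
    have := ee_nonneg j
    split_ifs with h2 h3 h3 <;> [skip; omega; omega; skip] <;> ring
  · have h1 : qPoch N * TT N j
        = PowerSeries.C (R := ℤ) (sg j) * (PowerSeries.X ^ (ee j).toNat
          * (qPoch N * gb (N+1) ((((N:ℕ):ℤ) - 5*j)/2))) := by
      rw [TT, XP_toNat (ee_nonneg j)]; ring
    rw [h1, PowerSeries.coeff_C_mul, PowerSeries.coeff_X_pow_mul']
    rw [if_neg (by omega), if_neg (by omega)]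
    ring

lemma hExp_five (n : ℤ) : hExp 5 n = ee n := by
  obtain ⟨t, ht⟩ := Int.even_mul_succ_self n
  have h1 : hExp 5 n = 5*t - n := by
    rw [hExp]
    rw [show ((5:ℕ):ℤ) * (n*(n+1)) = (5*t)*2 by rw [ht]; ring]
    rw [Int.mul_ediv_cancel _ two_ne_zero]
  have h2 := ee_spec n
  have h3 : n * (5*n+3) = 5*(n*(n+1)) - 2*n := by ring
  have h4 : n * (n+1) = t + t := ht
  omega

lemma eps_five (n : ℤ) : eps 5 n = sg n := by
  rw [eps, if_pos (by decide : Odd 5), sg]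

lemma coeff_hSeries (m : ℕ) :
    PowerSeries.coeff (R := ℤ) m (hSeries 5)
    = ∑ j ∈ Finset.Icc (-((7*m+7:ℕ):ℤ)-1) (((7*m+7:ℕ):ℤ)+1),
        (if ee j = (m:ℤ) then sg j else 0) := by
  rw [hSeries, PowerSeries.coeff_mk]
  have hvan : ∀ j ∉ Finset.Icc (-((7*m+7:ℕ):ℤ)-1) (((7*m+7:ℕ):ℤ)+1),
      (if hExp 5 j = (m:ℤ) then eps 5 j else 0) = 0 := by
    intro j hj
    simp only [Finset.mem_Icc] at hj
    have hne : ¬ (hExp 5 j = (m:ℤ)) := by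
      rw [hExp_five]
      intro h
      have h2 := ee_ge j
      rw [h] at h2
      have h3 := abs_le.1 h2
      push_cast at hj
      omega
    rw [if_neg hne]
  rw [tsum_eq_sum hvan]
  apply Finset.sum_congr rfl
  intro j _
  rw [hExp_five, eps_five]

/-- The second Rogers–Ramanujan identity in theta-function form:
`(q)_∞ · Σ_{a≥0} q^{a²+a}/(q)_a = h_5(q)` in `ℤ[[q]]`. -/
theorem rogers_ramanujan_second : 
    qPochInf * seriesSum (fun a : ℕ =>
      (PowerSeries.X : PowerSeries ℤ) ^ (a ^ 2 + a) * qPochInv a) = hSeries 5 := by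
  ext m
  set N : ℕ := 7*m+7 with hN
  have step1 : PowerSeries.coeff (R := ℤ) m (qPochInf * seriesSum (fun a : ℕ =>
      (PowerSeries.X : PowerSeries ℤ) ^ (a ^ 2 + a) * qPochInv a))
      = PowerSeries.coeff (R := ℤ) m (qPoch N * cc N) := by
    rw [PowerSeries.coeff_mul, PowerSeries.coeff_mul]
    apply Finset.sum_congr rfl
    rintro ⟨u, v⟩ huv
    rw [Finset.HasAntidiagonal.mem_antidiagonal] at huv
    rw [coeff_qPochInf (show u < N by omega), coeff_S v N (by omega)]
  rw [step1, cc_eq_EE, EE, Finset.mul_sum, map_sum, coeff_hSeries]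
  apply Finset.sum_congr rfl
  intro j _
  exact coeff_qPoch_mul_TT m j

end
end
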